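/- arXiv:2401.17872 — 6 statements merged into one kernel-verified Lean document; each statement's English description precedes it below -/
import Mathlib

section
/- Let G be a finite group acting transitively on a finite set S, and let P and Q be two G-invariant partitions of S. For p ∈ P and q ∈ Q let G_p and G_q denote the setwise stabilizers of the blocks p and q, and let π : S → Q be the map sending a point to its Q-block. Then the following are equivalent: (1) the sets π(p), for p ∈ P, form a partition of Q; (2) for every p ∈ P and q ∈ Q with p ∩ q ≠ ∅, one has G_p G_q = G_q G_p; (3) for every p ∈ P and q ∈ Q with p ∩ q ≠ ∅, the product set G_p · G_q is a subgroup of G. -/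
open Pointwise

section Helpers

variable {G S : Type*} [Group G] [MulAction G S]

private lemma smul_block (s : Setoid S) (h : ∀ (g : G) (x y : S), s.r x y → s.r (g • x) (g • y))
    (g : G) (x : S) : g • {z | s.r z x} = {z | s.r z (g • x)} := by
  ext w
  constructor
  · rintro ⟨z, hz, rfl⟩
    exact h g z x hz
  · intro hw
    refine ⟨g⁻¹ • w, ?_, by simp⟩
    have := h g⁻¹ w (g • x) hw
    simpa using this

private lemma mem_stab (s : Setoid S) (h : ∀ (g : G) (x y : S), s.r x y → s.r (g • x) (g • y))
    (g : G) (x : S) :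
    g ∈ MulAction.stabilizer G {z | s.r z x} ↔ s.r (g • x) x := by
  rw [MulAction.mem_stabilizer_iff]
  constructor
  · intro hg
    have hx : g • x ∈ g • {z | s.r z x} := ⟨x, s.iseqv.refl x, rfl⟩
    rw [hg] at hx
    exact hx
  · intro hg
    rw [smul_block s h]
    ext w
    exact ⟨fun hw => s.iseqv.trans hw hg, fun hw => s.iseqv.trans hw (s.iseqv.symm hg)⟩

private lemma mem_prod_iff (sP sQ : Setoid S)
    (hP : ∀ (g : G) (x y : S), sP.r x y → sP.r (g • x) (g • y))
    (hQ : ∀ (g : G) (x y : S), sQ.r x y → sQ.r (g • x) (g • y))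
    (htrans : ∀ s s' : S, ∃ g : G, g • s = s') (x : S) (g : G) :
    g ∈ (MulAction.stabilizer G {z | sP.r z x} : Set G) *
        (MulAction.stabilizer G {z | sQ.r z x} : Set G) ↔
      ∃ z, sQ.r z x ∧ sP.r (g • z) x := by
  constructor
  · rintro ⟨a, ha, b, hb, rfl⟩
    have ha' : a ∈ MulAction.stabilizer G {z | sP.r z x} := ha
    have hb' : b ∈ MulAction.stabilizer G {z | sQ.r z x} := hb
    refine ⟨b⁻¹ • x, (mem_stab sQ hQ b⁻¹ x).mp (inv_mem hb'), ?_⟩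
    have : (a * b) • b⁻¹ • x = a • x := by
      rw [smul_smul, mul_assoc, mul_inv_cancel, mul_one]
    rw [this]
    exact (mem_stab sP hP a x).mp ha'
  · rintro ⟨z, hz, hgz⟩
    obtain ⟨b, hb⟩ := htrans x z
    obtain ⟨a, ha⟩ := htrans x (g • z)
    have hbmem : b ∈ MulAction.stabilizer G {z | sQ.r z x} := by
      rw [mem_stab sQ hQ, hb]; exact hz
    have hamem : a ∈ MulAction.stabilizer G {z | sP.r z x} := by
      rw [mem_stab sP hP, ha]; exact hgz
    have hcmem : a⁻¹ * g * b ∈ MulAction.stabilizer G {z | sQ.r z x} := by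
      rw [mem_stab sQ hQ]
      have : (a⁻¹ * g * b) • x = x := by
        rw [mul_smul, mul_smul, hb, ← ha, inv_smul_smul]
      simpa [this] using sQ.iseqv.refl x
    exact ⟨a, hamem, (a⁻¹ * g * b) * b⁻¹, mul_mem hcmem (inv_mem hbmem), by group⟩

/-- `(2)` at `x` rephrased as a relation statement. -/
private lemma cond2_iff (sP sQ : Setoid S)
    (hP : ∀ (g : G) (x y : S), sP.r x y → sP.r (g • x) (g • y))
    (hQ : ∀ (g : G) (x y : S), sQ.r x y → sQ.r (g • x) (g • y))
    (htrans : ∀ s s' : S, ∃ g : G, g • s = s') (x : S) :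
    ((MulAction.stabilizer G {z | sP.r z x} : Set G) *
        (MulAction.stabilizer G {z | sQ.r z x} : Set G) =
      (MulAction.stabilizer G {z | sQ.r z x} : Set G) *
        (MulAction.stabilizer G {z | sP.r z x} : Set G)) ↔
      ∀ g : G, (∃ z, sQ.r z x ∧ sP.r (g • z) x) ↔ (∃ z, sP.r z x ∧ sQ.r (g • z) x) := by
  constructor
  · intro h g
    rw [← mem_prod_iff sP sQ hP hQ htrans, ← mem_prod_iff sQ sP hQ hP htrans, h]
  · intro h
    ext g
    rw [mem_prod_iff sP sQ hP hQ htrans, mem_prod_iff sQ sP hQ hP htrans]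
    exact h g

private lemma prod_comm_iff_subgroup {G : Type*} [Group G] (A B : Subgroup G) :
    (A : Set G) * (B : Set G) = (B : Set G) * (A : Set G) ↔
      ∃ H : Subgroup G, (H : Set G) = (A : Set G) * (B : Set G) := by
  constructor
  · intro h
    refine ⟨{ carrier := (A : Set G) * (B : Set G),
              one_mem' := ⟨1, one_mem A, 1, one_mem B, one_mul 1⟩,
              mul_mem' := ?_, inv_mem' := ?_ }, rfl⟩
    · rintro x y ⟨a, ha, b, hb, rfl⟩ ⟨a', ha', b', hb', rfl⟩
      have : b * a' ∈ (A : Set G) * (B : Set G) := by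
        rw [h]; exact ⟨b, hb, a', ha', rfl⟩
      obtain ⟨a'', ha'', b'', hb'', he⟩ := this
      have he' : a'' * b'' = b * a' := he
      refine ⟨a * a'', mul_mem ha ha'', b'' * b', mul_mem hb'' hb', ?_⟩
      show a * a'' * (b'' * b') = a * b * (a' * b')
      have h2 : a * b * (a' * b') = a * (b * a') * b' := by group
      rw [h2, ← he']
      group
    · rintro x ⟨a, ha, b, hb, rfl⟩
      show (a * b)⁻¹ ∈ (A : Set G) * (B : Set G)
      rw [h, mul_inv_rev]
      exact ⟨b⁻¹, inv_mem hb, a⁻¹, inv_mem ha, rfl⟩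
  · rintro ⟨H, hH⟩
    apply Set.Subset.antisymm
    · rintro x ⟨a, ha, b, hb, rfl⟩
      have hab : a * b ∈ H := by rw [SetLike.mem_coe.symm, hH]; exact ⟨a, ha, b, hb, rfl⟩
      have : (a * b)⁻¹ ∈ (H : Set G) := SetLike.mem_coe.mpr (inv_mem hab)
      rw [hH] at this
      obtain ⟨a', ha', b', hb', he⟩ := this
      have he' : a' * b' = (a * b)⁻¹ := he
      refine ⟨b'⁻¹, inv_mem hb', a'⁻¹, inv_mem ha', ?_⟩
      show b'⁻¹ * a'⁻¹ = a * b
      rw [← mul_inv_rev, he', inv_inv]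
    · rintro x ⟨b, hb, a, ha, rfl⟩
      have h1 : b ∈ (H : Set G) := by rw [hH]; exact ⟨1, one_mem A, b, hb, one_mul b⟩
      have h2 : a ∈ (H : Set G) := by rw [hH]; exact ⟨a, ha, 1, one_mem B, mul_one a⟩
      have : b * a ∈ (H : Set G) := SetLike.mem_coe.mpr (mul_mem h1 h2)
      rwa [hH] at this

end Helpers

section Main

variable {G S : Type*} [Group G] [MulAction G S]

private lemma incl (sP sQ : Setoid S)
    (hP : ∀ (g : G) (x y : S), sP.r x y → sP.r (g • x) (g • y))
    (hQ : ∀ (g : G) (x y : S), sQ.r x y → sQ.r (g • x) (g • y))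
    (htrans : ∀ s s' : S, ∃ g : G, g • s = s')
    (h2 : ∀ x : S,
        (MulAction.stabilizer G {z | sP.r z x} : Set G) *
            (MulAction.stabilizer G {z | sQ.r z x} : Set G) =
          (MulAction.stabilizer G {z | sQ.r z x} : Set G) *
            (MulAction.stabilizer G {z | sP.r z x} : Set G))
    {x y z w : S} (hzx : sP.r z x) (hwy : sP.r w y) (hzw : sQ.r z w) :
    Quotient.mk sQ '' {u | sP.r u x} ⊆ Quotient.mk sQ '' {u | sP.r u y} := by
  rintro c ⟨u, hux, rfl⟩
  obtain ⟨h, hh⟩ := htrans z u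
  obtain ⟨g, hg⟩ := htrans z w
  have hcond := (cond2_iff sP sQ hP hQ htrans z).mp (h2 z) (h⁻¹ * g)
  have hpre : ∃ t, sQ.r t z ∧ sP.r ((h⁻¹ * g) • t) z := by
    refine ⟨g⁻¹ • z, ?_, ?_⟩
    · have := hQ g⁻¹ z w hzw
      rw [← hg] at this
      simpa using this
    · have huz : sP.r (h • z) z := by
        rw [hh]; exact sP.iseqv.trans hux (sP.iseqv.symm hzx)
      have := hP h⁻¹ (h • z) z huz
      simp only [inv_smul_smul] at this
      have h2' : (h⁻¹ * g) • (g⁻¹ • z) = h⁻¹ • z := by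
        rw [mul_smul, smul_inv_smul]
      rw [h2']
      exact sP.iseqv.symm this
  obtain ⟨t, htz, hkt⟩ := hcond.mp hpre
  refine ⟨g • t, ?_, ?_⟩
  · have := hP g t z htz
    rw [hg] at this
    exact sP.iseqv.trans this hwy
  · have hthis : sQ.r (h • ((h⁻¹ * g) • t)) (h • z) := hQ h _ _ hkt
    have h3 : h • ((h⁻¹ * g) • t) = g • t := by
      rw [smul_smul]
      congr 1
      group
    rw [h3, hh] at hthis
    exact Quotient.sound hthis

end Main

/-- for a transitive action of `G` on `S` and two `G`-invariant partitions `P`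
(given by `sP`) and `Q` (given by `sQ`), with setwise block stabilizers `G_p`, `G_q`, the
following are equivalent: (1) the images of the `P`-blocks in `Q` form a partition of `Q`;
(2) `G_p G_q = G_q G_p` for blocks with `p ∩ q ≠ ∅`; (3) `G_p · G_q` is a subgroup for blocks
with `p ∩ q ≠ ∅`. -/
theorem stmt1 {G S : Type*} [Group G] [Finite G] [Finite S] [MulAction G S]
    (htrans : ∀ s s' : S, ∃ g : G, g • s = s')
    (sP sQ : Setoid S)
    (hP : ∀ (g : G) (x y : S), sP.r x y → sP.r (g • x) (g • y))
    (hQ : ∀ (g : G) (x y : S), sQ.r x y → sQ.r (g • x) (g • y)) :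
    ((∀ x y : S,
        ((Quotient.mk sQ '' {z | sP.r z x}) ∩ (Quotient.mk sQ '' {z | sP.r z y})).Nonempty →
        Quotient.mk sQ '' {z | sP.r z x} = Quotient.mk sQ '' {z | sP.r z y}) ↔
      (∀ x : S,
        (MulAction.stabilizer G {z | sP.r z x} : Set G) *
            (MulAction.stabilizer G {z | sQ.r z x} : Set G) =
          (MulAction.stabilizer G {z | sQ.r z x} : Set G) *
            (MulAction.stabilizer G {z | sP.r z x} : Set G))) ∧
    ((∀ x : S,
        (MulAction.stabilizer G {z | sP.r z x} : Set G) *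
            (MulAction.stabilizer G {z | sQ.r z x} : Set G) =
          (MulAction.stabilizer G {z | sQ.r z x} : Set G) *
            (MulAction.stabilizer G {z | sP.r z x} : Set G)) ↔
      (∀ x : S, ∃ H : Subgroup G,
        (H : Set G) =
          (MulAction.stabilizer G {z | sP.r z x} : Set G) *
            (MulAction.stabilizer G {z | sQ.r z x} : Set G))) := by
  constructor
  · constructor
    · -- (1) → (2)
      intro h1 x
      rw [cond2_iff sP sQ hP hQ htrans]
      intro g
      constructor
      · rintro ⟨z, hz, hgz⟩
        have hne : ((Quotient.mk sQ '' {w | sP.r w x}) ∩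
            (Quotient.mk sQ '' {w | sP.r w (g • x)})).Nonempty := by
          refine ⟨Quotient.mk sQ (g • z), ⟨g • z, hgz, rfl⟩,
            ⟨g • x, sP.iseqv.refl _, Quotient.sound (sQ.iseqv.symm (hQ g z x hz))⟩⟩
        have heq := h1 x (g • x) hne
        have hx : Quotient.mk sQ x ∈ Quotient.mk sQ '' {w | sP.r w x} :=
          ⟨x, sP.iseqv.refl x, rfl⟩
        rw [heq] at hx
        obtain ⟨w, hw, hwq⟩ := hx
        refine ⟨g⁻¹ • w, ?_, ?_⟩
        · have := hP g⁻¹ w (g • x) hw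
          simpa using this
        · rw [smul_inv_smul]
          exact Quotient.eq.mp hwq
      · rintro ⟨z, hz, hgz⟩
        have hne : ((Quotient.mk sQ '' {w | sP.r w (g • x)}) ∩
            (Quotient.mk sQ '' {w | sP.r w x})).Nonempty := by
          refine ⟨Quotient.mk sQ (g • z), ⟨g • z, hP g z x hz, rfl⟩,
            ⟨x, sP.iseqv.refl _, Quotient.sound (sQ.iseqv.symm hgz)⟩⟩
        have heq := h1 (g • x) x hne
        have hx : Quotient.mk sQ (g • x) ∈ Quotient.mk sQ '' {w | sP.r w (g • x)} :=
          ⟨g • x, sP.iseqv.refl _, rfl⟩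
        rw [heq] at hx
        obtain ⟨w, hw, hwq⟩ := hx
        refine ⟨g⁻¹ • w, ?_, ?_⟩
        · have : sQ.r w (g • x) := Quotient.eq.mp hwq
          have := hQ g⁻¹ w (g • x) this
          simpa using this
        · rw [smul_inv_smul]
          exact hw
    · -- (2) → (1)
      intro h2 x y hne
      obtain ⟨c, ⟨z, hzx, hcz⟩, ⟨w, hwy, hcw⟩⟩ := hne
      have hzw : sQ.r z w := Quotient.eq.mp (hcz.trans hcw.symm)
      exact Set.Subset.antisymm
        (incl sP sQ hP hQ htrans h2 hzx hwy hzw)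
        (incl sP sQ hP hQ htrans h2 hwy hzx (sQ.iseqv.symm hzw))
  · exact forall_congr' fun x =>
      prod_comm_iff_subgroup (MulAction.stabilizer G {z | sP.r z x})
        (MulAction.stabilizer G {z | sQ.r z x})
end

section
/- Suppose x, y, z ∈ S_d are permutations with cycle types [d] (a single d-cycle), [r, 1^{d-r}] (one r-cycle and d−r fixed points), and [s^q, t] (q cycles of length s and one t-cycle), respectively, where q, s, t, r are positive integers with r > 1, t > 1, q = (d−t)/s, gcd(s,t) = 1, and r + t + q(s−1) = d + 1. Then the subgroup ⟨x, y, z⟩ of S_d is primitive. -/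
/-!
Transitivity comes from the `d`-cycle `x`. For primitivity let `B` be a block of size `b` with
`1 < b < d`, so `b ∣ d`. If `a` lies in a block `C` and `p` is the period of `C` under `g`, then
`C` meets the `g`-orbit of `a` in `period g a / p` points. For `z` and `a` on its `t`-cycle,
`p` divides `t` and the period `s` of every other point of `C`, so either `p = 1`, `C` contains
the `t`-cycle and the rest of `C` is a union of `s`-cycles (`b = t + s m`), or `C` lies inside
the `t`-cycle (`b ∣ t`). The `r`-cycle `y` is the case `s = 1`: `r ≤ b` or `b ∣ r`. Since
Riemann–Hurwitz gives `r = q + 1`, coprimality of `s` and `t` makes both alternatives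
incompatible with `b ∣ q s + t`.
-/

open Equiv MulAction Pointwise Subgroup Finset

namespace MulAction

variable {G X : Type*} [Group G] [MulAction G X] {g : G} {a b : X}

theorem mem_orbit_zpowers_iff : b ∈ orbit (zpowers g) a ↔ ∃ k : ℤ, g ^ k • a = b := by
  simp only [mem_orbit_iff, Subtype.exists, mem_zpowers_iff, exists_prop, exists_exists_eq_and,
    Subgroup.mk_smul]

theorem ncard_orbit_zpowers [Finite X] (g : G) (a : X) :
    (orbit (zpowers g) a).ncard = period g a := by
  have := Fintype.ofFinite (orbit (zpowers g) a)
  rw [← Nat.card_coe_set_eq, Nat.card_eq_fintype_card, ← minimalPeriod_eq_card,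
    period_eq_minimalPeriod]

theorem orbit_zpowers_subset {S : Set X} (hS : g • S = S) (ha : a ∈ S) :
    orbit (zpowers g) a ⊆ S := by
  intro u hu
  obtain ⟨k, rfl⟩ := mem_orbit_zpowers_iff.1 hu
  have hk : g ^ k • S = S :=
    zpow_smul_eq_iff_period_dvd.2 (by rw [period_eq_one_iff.2 hS]; exact one_dvd k)
  rw [← hk]
  exact Set.smul_mem_smul_set ha

theorem smul_orbit_zpowers (g : G) (a : X) : g • orbit (zpowers g) a = orbit (zpowers g) a :=
  smul_orbit (⟨g, mem_zpowers g⟩ : zpowers g) a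

theorem dvd_ncard_of_period_eq [Finite X] {n : ℕ} {S : Set X} (hS : g • S = S)
    (h : ∀ u ∈ S, period g u = n) : n ∣ S.ncard := by
  induction hcard : S.ncard using Nat.strong_induction_on generalizing S with
  | _ N ih =>
  obtain rfl | ⟨u, hu⟩ := S.eq_empty_or_nonempty
  · simp [← hcard]
  have hOS := orbit_zpowers_subset hS hu
  have hO : (orbit (zpowers g) u).ncard = n := by rw [ncard_orbit_zpowers, h u hu]
  have hsplit := Set.ncard_sdiff_add_ncard_of_subset hOS
  have hpos : 0 < n := by
    rw [← hO, Set.ncard_pos]; exact ⟨u, mem_orbit_self u⟩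
  have hrest : n ∣ (S \ orbit (zpowers g) u).ncard :=
    ih _ (by omega) (by rw [Set.smul_set_sdiff, hS, smul_orbit_zpowers])
      (fun v hv => h v hv.1) rfl
  rw [← hcard, ← hsplit, hO]
  exact dvd_add hrest dvd_rfl

end MulAction

namespace MulAction.IsBlock

variable {G X : Type*} [Group G] [MulAction G X] {B C : Set X} {g : G} {a : X}

theorem zpow_smul_mem_iff (hC : IsBlock G C) (ha : a ∈ C) (k : ℤ) :
    g ^ k • a ∈ C ↔ (period g C : ℤ) ∣ k := by
  rw [← zpow_smul_eq_iff_period_dvd]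
  refine ⟨hC.smul_eq_of_mem ha, fun h => ?_⟩
  rw [← h]
  exact Set.smul_mem_smul_set ha

theorem period_dvd_period (hC : IsBlock G C) (ha : a ∈ C) : period g C ∣ period g a := by
  have h := (hC.zpow_smul_mem_iff (g := g) ha (period g a)).1
    (by rw [zpow_natCast, pow_period_smul]; exact ha)
  exact_mod_cast h

theorem inter_orbit_zpowers (hC : IsBlock G C) (ha : a ∈ C) :
    C ∩ orbit (zpowers g) a = orbit (zpowers (g ^ period g C)) a := by
  ext u
  simp only [Set.mem_inter_iff, mem_orbit_zpowers_iff, ← zpow_natCast, ← zpow_mul]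
  constructor
  · rintro ⟨hu, k, rfl⟩
    obtain ⟨j, rfl⟩ := (hC.zpow_smul_mem_iff ha k).1 hu
    exact ⟨j, rfl⟩
  · rintro ⟨j, rfl⟩
    exact ⟨(hC.zpow_smul_mem_iff ha _).2 (dvd_mul_right _ _), _, rfl⟩

theorem ncard_inter_orbit_zpowers_mul_period [Finite X] (hC : IsBlock G C) (ha : a ∈ C) :
    (C ∩ orbit (zpowers g) a).ncard * period g C = period g a := by
  have hper : a ∈ Function.periodicPts (g • ·) := (MulAction.injective g).mem_periodicPts a
  have hdvd := hC.period_dvd_period (g := g) ha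
  rw [hC.inter_orbit_zpowers ha, ncard_orbit_zpowers, period_eq_minimalPeriod, ← smul_iterate,
    Function.minimalPeriod_iterate_eq_div_gcd' hper, ← period_eq_minimalPeriod,
    Nat.gcd_eq_right hdvd, Nat.div_mul_cancel hdvd]

theorem ncard_dvd_or_exists_eq_add_mul [Finite X] [IsPretransitive G X] (hB : IsBlock G B)
    (hBne : B.Nonempty) (g : G) (a : X) {s t : ℕ} (hst : s.Coprime t) (ht : period g a = t)
    (hs : ∀ u ∉ orbit (zpowers g) a, period g u = s) :
    B.ncard ∣ t ∨ ∃ m, B.ncard = t + s * m := by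
  obtain ⟨b, hb⟩ := hBne
  obtain ⟨h, rfl⟩ := exists_smul_eq G b a
  have hC : IsBlock G (h • B) := hB.translate h
  have ha : h • b ∈ h • B := Set.smul_mem_smul_set hb
  have key := hC.ncard_inter_orbit_zpowers_mul_period (g := g) ha
  rw [← Set.ncard_smul_set h B]
  by_cases hp : period g (h • B) = 1
  · right
    have hfix := period_eq_one_iff.1 hp
    obtain ⟨m, hm⟩ := dvd_ncard_of_period_eq (S := h • B \ orbit (zpowers g) (h • b))
      (by rw [Set.smul_set_sdiff, hfix, smul_orbit_zpowers]) (fun u hu => hs u hu.2)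
    refine ⟨m, ?_⟩
    rw [← Set.ncard_inter_add_ncard_sdiff_eq_ncard (h • B) (orbit (zpowers g) (h • b)), ← hm,
      ← ht, ← key, hp, mul_one]
  · left
    have hCO : h • B ⊆ orbit (zpowers g) (h • b) := by
      intro u hu
      by_contra hu'
      exact hp (Nat.eq_one_of_dvd_coprimes hst
        (hs u hu' ▸ hC.period_dvd_period hu) (ht ▸ hC.period_dvd_period ha))
    rw [Set.inter_eq_left.2 hCO] at key
    exact ⟨_, ht ▸ key.symm⟩

end MulAction.IsBlock

namespace Equiv.Perm

theorem mem_orbit_zpowers_mk_iff_sameCycle {α : Type*} {H : Subgroup (Perm α)}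
    {σ : Perm α} (hσ : σ ∈ H) {a u : α} : u ∈ orbit (zpowers (⟨σ, hσ⟩ : H)) a ↔ σ.SameCycle a u :=
  mem_orbit_zpowers_iff

variable {α : Type*} [Fintype α] [DecidableEq α] {σ : Perm α} {u v : α}

theorem apply_ne_self_of_sum_cycleType_eq_card (h : σ.cycleType.sum = Fintype.card α) (a : α) :
    σ a ≠ a := by
  have hsupp : σ.support = univ := eq_univ_of_card _ (by rw [← sum_cycleType, h])
  exact mem_support.1 (hsupp ▸ mem_univ a)

theorem exists_pow_apply_eq_of_cycleType_eq_singleton_card (h : σ.cycleType = {Fintype.card α})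
    (a b : α) : ∃ n : ℕ, (σ ^ n) a = b :=
  (card_cycleType_eq_one.1 (by rw [h]; rfl)).exists_pow_eq
    (apply_ne_self_of_sum_cycleType_eq_card (by simp [h]) a)
    (apply_ne_self_of_sum_cycleType_eq_card (by simp [h]) b)

theorem period_eq_card_support_cycleOf (hu : σ u ≠ u) :
    period σ u = #(σ.cycleOf u).support := by
  have hc := σ.isCycle_cycleOf hu
  rw [← hc.orderOf]
  refine Nat.dvd_right_iff_eq.1 fun n => ?_
  rw [← pow_smul_eq_iff_period_dvd, orderOf_dvd_iff_pow_eq_one,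
    hc.pow_eq_one_iff' (by rwa [cycleOf_apply_self]), cycleOf_pow_apply_self]
  rfl

theorem sameCycle_of_count_cycleType_eq_one {n : ℕ} (h : σ.cycleType.count n = 1)
    (hu : σ u ≠ u) (hv : σ v ≠ v) (hun : period σ u = n) (hvn : period σ v = n) :
    σ.SameCycle u v := by
  have hcard : #(σ.cycleFactorsFinset.filter (fun c => #c.support = n)) = 1 := by
    rw [← h, cycleType_def, Multiset.count_map, card_def, filter_val]
    simp only [Function.comp_apply, eq_comm]
  have hmem : ∀ w, σ w ≠ w → period σ w = n →
      σ.cycleOf w ∈ σ.cycleFactorsFinset.filter (fun c => #c.support = n) := fun w hw hwn =>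
    mem_filter.2 ⟨cycleOf_mem_cycleFactorsFinset_iff.2 (mem_support.2 hw),
      by rw [← period_eq_card_support_cycleOf hw, hwn]⟩
  have heq := card_le_one.1 hcard.le _ (hmem u hu hun) _ (hmem v hv hvn)
  have hvu : v ∈ (σ.cycleOf u).support := by
    rw [heq]; exact mem_support_cycleOf_iff.2 ⟨SameCycle.refl _ _, mem_support.2 hv⟩
  exact (mem_support_cycleOf_iff.1 hvu).1

theorem exists_period_eq_of_cycleType_eq {q s t : ℕ} (hst : s ≠ t)
    (hcard : q * s + t = Fintype.card α)
    (hσ : σ.cycleType = if s = 1 then {t} else Multiset.replicate q s + {t}) :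
    ∃ a, period σ a = t ∧ ∀ u, ¬ σ.SameCycle a u → period σ u = s := by
  have ht : t ∈ σ.cycleType := by split_ifs at hσ <;> simp [hσ]
  have hcount : σ.cycleType.count t = 1 := by
    split_ifs at hσ <;> simp [hσ, Multiset.count_replicate, hst]
  obtain ⟨c, hc, hct⟩ : ∃ c ∈ σ.cycleFactorsFinset, #c.support = t := by
    simpa [cycleType_def] using ht
  obtain ⟨a, ha⟩ : c.support.Nonempty := by
    rw [← card_pos, hct]
    exact zero_lt_two.trans_le (two_le_of_mem_cycleType ht)
  have hσa : σ a ≠ a := mem_support.1 (mem_cycleFactorsFinset_support_le hc ha)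
  have hat : period σ a = t := by
    rw [period_eq_card_support_cycleOf hσa, ← cycle_is_cycleOf ha hc, hct]
  refine ⟨a, hat, fun u hu => ?_⟩
  by_cases hσu : σ u = u
  · rcases eq_or_ne s 1 with rfl | hs1
    · exact period_eq_one_iff.2 hσu
    · refine absurd hσu (apply_ne_self_of_sum_cycleType_eq_card ?_ u)
      simp [hσ, hs1, ← hcard]
  · have hmem : period σ u ∈ σ.cycleType := by
      rw [period_eq_card_support_cycleOf hσu, cycleType_def]
      exact Multiset.mem_map_of_mem _ (cycleOf_mem_cycleFactorsFinset_iff.2 (mem_support.2 hσu))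
    have hne : period σ u ≠ t := fun h =>
      hu (sameCycle_of_count_cycleType_eq_one hcount hσa hσu hat h)
    split_ifs at hσ <;> simp_all [Multiset.mem_replicate]

end Equiv.Perm

theorem not_dvd_of_riemannHurwitz {d q s t r b : ℕ} (hq : 0 < q) (hs : 0 < s) (ht : 1 < t)
    (hqs : q * s + t = d) (hcop : s.Coprime t) (hRH : r + t + q * (s - 1) = d + 1)
    (hb : 1 < b) (hbd : b < d) (hr : b ∣ r ∨ r ≤ b) (hz : b ∣ t ∨ ∃ m, b = t + s * m) :
    ¬ b ∣ d := by
  intro hdvd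
  have hrq : r = q + 1 := by
    obtain ⟨s, rfl⟩ := Nat.exists_eq_add_of_lt hs
    simp only [zero_add, Nat.add_sub_cancel, mul_add, mul_one] at hRH hqs
    omega
  subst hqs hrq
  rcases hz with hbt | ⟨m, rfl⟩
  · have hbq : b ∣ q := (Nat.Coprime.coprime_dvd_left hbt hcop.symm).dvd_of_dvd_mul_right
      ((Nat.dvd_add_left hbt).1 hdvd)
    have hbq' := Nat.le_of_dvd hq hbq
    rcases hr with hbr | hrb
    · have := Nat.le_of_dvd one_pos ((Nat.dvd_add_right hbq).1 hbr)
      omega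
    · omega
  · have hmq : m < q := by
      have : s * m < s * q := by linarith
      exact Nat.lt_of_mul_lt_mul_left this
    obtain ⟨k, rfl⟩ := Nat.exists_eq_add_of_lt hmq
    have hcopb : (t + s * m).Coprime s := (Nat.coprime_add_mul_left_left t s m).2 hcop.symm
    have hbk : t + s * m ∣ k + 1 := hcopb.dvd_of_dvd_mul_right
      ((Nat.dvd_add_right dvd_rfl).1 (by convert hdvd using 1; ring))
    have hbk' := Nat.le_of_dvd (by omega) hbk
    have hms : m ≤ s * m := Nat.le_mul_of_pos_left m hs
    rcases hr with hbr | hrb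
    · have := Nat.le_of_dvd (by omega)
        ((Nat.dvd_add_left hbk).1 (by convert hbr using 1; ring) : t + s * m ∣ m + 1)
      omega
    · omega

/-- permutations `x, y, z ∈ S_d` of cycle types `[d]`, `[r, 1^{d-r}]`, `[s^q, t]`
with `r, t > 1`, `q·s + t = d`, `gcd(s,t) = 1` and the Riemann–Hurwitz relation
`r + t + q(s−1) = d + 1` generate a primitive subgroup of `S_d`. -/
theorem stmt7 (d q s t r : ℕ) (hr : 1 < r) (ht : 1 < t) (hq : 0 < q) (hs : 0 < s)
    (hrd : r ≤ d)
    (hqs : q * s + t = d) (hcop : Nat.gcd s t = 1) (hRH : r + t + q * (s - 1) = d + 1)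
    (x y z : Equiv.Perm (Fin d))
    (hx : x.cycleType = {d})
    (hy : y.cycleType = {r})
    (hz : z.cycleType = if s = 1 then {t} else Multiset.replicate q s + {t}) :
    (∀ a b : Fin d, ∃ g ∈ Subgroup.closure {x, y, z}, g a = b) ∧
    ∀ B : Set (Fin d),
      (∀ g ∈ Subgroup.closure {x, y, z}, ⇑g '' B = B ∨ Disjoint (⇑g '' B) B) →
      B.Subsingleton ∨ B = Set.univ := by
  classical
  set G := Subgroup.closure {x, y, z}
  have hxG : x ∈ G := subset_closure (by simp)
  have hyG : y ∈ G := subset_closure (by simp)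
  have hzG : z ∈ G := subset_closure (by simp)
  have htrans : ∀ a b : Fin d, ∃ g ∈ G, g a = b := fun a b =>
    have ⟨n, hn⟩ :=
      Perm.exists_pow_apply_eq_of_cycleType_eq_singleton_card (by simpa using hx) a b
    ⟨x ^ n, pow_mem hxG n, hn⟩
  refine ⟨htrans, fun B hB => ?_⟩
  have : IsPretransitive G (Fin d) :=
    ⟨fun a b => have ⟨g, hg, hgab⟩ := htrans a b; ⟨⟨g, hg⟩, hgab⟩⟩
  have hBlock : IsBlock G B := isBlock_iff_smul_eq_or_disjoint.2 fun g => hB g g.2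
  by_contra! ⟨hBnontriv, hBuniv⟩
  obtain ⟨a₂, hya₂, hy₂⟩ := Perm.exists_period_eq_of_cycleType_eq (σ := y) (q := d - r)
    hr.ne (by rw [mul_one, Fintype.card_fin]; omega) (by simpa using hy)
  obtain ⟨a₃, hza₃, hz₃⟩ := Perm.exists_period_eq_of_cycleType_eq
    (fun hst => by rw [hst, Nat.gcd_self] at hcop; omega) (by simpa using hqs) hz
  have hyB := hBlock.ncard_dvd_or_exists_eq_add_mul hBnontriv.nonempty ⟨y, hyG⟩ a₂
    (Nat.coprime_one_left r) hya₂
    (fun u hu => hy₂ u (by rwa [Perm.mem_orbit_zpowers_mk_iff_sameCycle] at hu))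
  have hzB := hBlock.ncard_dvd_or_exists_eq_add_mul hBnontriv.nonempty ⟨z, hzG⟩ a₃ hcop hza₃
    (fun u hu => hz₃ u (by rwa [Perm.mem_orbit_zpowers_mk_iff_sameCycle] at hu))
  refine not_dvd_of_riemannHurwitz hq hs ht hqs hcop hRH
    (Set.one_lt_ncard_iff_nontrivial.2 hBnontriv)
    (by simpa using Set.ncard_lt_ncard (Set.ssubset_univ_iff.2 hBuniv))
    (hyB.imp_right fun ⟨m, hm⟩ => by omega) hzB ?_
  simpa using hBlock.ncard_dvd_card hBnontriv.nonempty
end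

section
/- Let σ ∈ S_d be a permutation that is a product of exactly r pairwise disjoint nontrivial cycles (and possibly fixed points), with r ≥ 1. Then there exists a permutation τ ∈ S_d that is a product of r − 1 disjoint transpositions such that στ is a single d-cycle. -/
/-!
Induct along the decomposition of `σ` into disjoint cycles, `σ = c * σ'`. If `σ' * τ'` is a
single cycle on the support of `σ'`, then `c * σ' * τ' * swap a b` is a single cycle on the
support of `σ` for any `a` moved by `c` and `b` moved by `σ'`: a transposition joining two
disjoint cycles merges them. For `τ' * swap a b` to be again a product of disjoint
transpositions, `b` must avoid the support of `τ'`; this is possible because `τ'` moves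
`2 (k - 1)` points while `σ'`, a product of `k` nontrivial cycles, moves at least `2 k`.
-/

open Finset

namespace Equiv.Perm

variable {α : Type*} [DecidableEq α] [Fintype α]

theorem sameCycle_of_eq_off_point {h q : Perm α} {a b y : α} (hb : b ∈ q.support)
    (ha : h a = q b) (heq : ∀ x ∈ q.support, x ≠ b → h x = q x) (hy : q.SameCycle b y) :
    h.SameCycle a y := by
  have key : ∀ n : ℕ, h.SameCycle a ((q ^ (n + 1)) b) := by
    intro n
    induction n with
    | zero => simpa [← ha] using SameCycle.refl h a
    | succ n ih =>
      rw [pow_succ', mul_apply]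
      by_cases hnb : (q ^ (n + 1)) b = b
      · rw [hnb, ← ha]
        exact sameCycle_apply_right.2 (SameCycle.refl h a)
      · rw [← heq _ (pow_apply_mem_support.2 hb) hnb]
        exact sameCycle_apply_right.2 ih
  obtain ⟨_ | n, hn, -, rfl⟩ := hy.exists_pow_eq''
  · exact absurd hn (lt_irrefl 0)
  · exact key n

theorem Disjoint.sameCycle_mul_mul_swap {p q : Perm α} (hd : p.Disjoint q) (hq : q.IsCycle)
    {a b y : α} (ha : a ∈ p.support) (hb : b ∈ q.support) (hy : y ∈ q.support) :
    (p * q * swap a b).SameCycle a y := by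
  have hp_fix : ∀ x ∈ q.support, p (q x) = q x := fun x hx =>
    notMem_support.1 (hd.symm.mem_imp (apply_mem_support.2 hx))
  refine sameCycle_of_eq_off_point hb ?_ (fun x hx hxb => ?_)
    (hq.sameCycle (mem_support.1 hb) (mem_support.1 hy))
  · simp [hp_fix b hb]
  · have hxa : x ≠ a := fun h => hd.mem_imp ha (h ▸ hx)
    simp [swap_apply_of_ne_of_ne hxa hxb, hp_fix x hx]

theorem Disjoint.isCycle_mul_mul_swap {p q : Perm α} (hd : p.Disjoint q) (hp : p.IsCycle)
    (hq : q.IsCycle) {a b : α} (ha : a ∈ p.support) (hb : b ∈ q.support) :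
    (p * q * swap a b).IsCycle ∧ (p * q * swap a b).support = p.support ∪ q.support := by
  set g := p * q * swap a b with hg_def
  have hab : a ≠ b := fun h => hd.mem_imp ha (h ▸ hb)
  have hsame : ∀ y ∈ p.support ∪ q.support, g.SameCycle a y := by
    have hab' : g.SameCycle a b := hd.sameCycle_mul_mul_swap hq ha hb hb
    have hg : g = q * p * swap b a := by rw [hg_def, hd.commute.eq, swap_comm]
    rintro y hy
    rcases mem_union.1 hy with hy | hy
    · exact hab'.trans (hg ▸ hd.symm.sameCycle_mul_mul_swap hp hb ha hy)
    · exact hd.sameCycle_mul_mul_swap hq ha hb hy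
  have hga : g a ≠ a := fun h => hab ((hsame b (mem_union_right _ hb)).eq_of_left h)
  have hsupp_le : g.support ⊆ p.support ∪ q.support := by
    refine (support_mul_le _ _).trans (sup_le (support_mul_le _ _) ?_)
    rw [support_swap hab]
    exact insert_subset (mem_union_left _ ha) (singleton_subset_iff.2 (mem_union_right _ hb))
  refine ⟨⟨a, hga, fun y hy => hsame y (hsupp_le (mem_support.2 hy))⟩,
    hsupp_le.antisymm fun y hy => ?_⟩
  exact mem_support.2 fun h => hga (((hsame y hy).apply_eq_self_iff).2 h)

theorem two_mul_card_cycleType_le (σ : Perm α) : 2 * Multiset.card σ.cycleType ≤ #σ.support := by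
  rw [← sum_cycleType, mul_comm]
  exact Multiset.card_nsmul_le_sum fun _ => two_le_of_mem_cycleType

theorem exists_swaps_mul_isCycle {σ : Perm α} (hσ : σ ≠ 1) :
    ∃ τ : Perm α, τ.cycleType = Multiset.replicate (Multiset.card σ.cycleType - 1) 2 ∧
      τ.support ⊆ σ.support ∧ (σ * τ).IsCycle ∧ (σ * τ).support = σ.support := by
  have of_isCycle : ∀ c : Perm α, c.IsCycle → ∃ τ : Perm α,
      τ.cycleType = Multiset.replicate (Multiset.card c.cycleType - 1) 2 ∧
      τ.support ⊆ c.support ∧ (c * τ).IsCycle ∧ (c * τ).support = c.support := fun c hc =>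
    ⟨1, by simp [hc.cycleType], by simp, by simpa using hc, by simp⟩
  induction σ using cycle_induction_on with
  | base_one => exact absurd rfl hσ
  | base_cycles c hc => exact of_isCycle c hc
  | induction_disjoint c σ hd hc _ ih =>
    rcases eq_or_ne σ 1 with rfl | hσ1
    · simpa using of_isCycle c hc
    obtain ⟨τ, hτ, hτσ, hστ, hστ_supp⟩ := ih hσ1
    have hk : Multiset.card σ.cycleType ≠ 0 := card_cycleType_eq_zero.not.2 hσ1
    obtain ⟨a, ha⟩ := hc.nonempty_support
    obtain ⟨b, hbσ, hbτ⟩ : ∃ b ∈ σ.support, b ∉ τ.support := by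
      refine exists_mem_notMem_of_card_lt_card ?_
      have := two_mul_card_cycleType_le σ
      rw [← sum_cycleType, hτ, Multiset.sum_replicate, smul_eq_mul]
      omega
    have haτ : a ∉ τ.support := fun h => hd.mem_imp ha (hτσ h)
    have hab : a ≠ b := fun h => hd.mem_imp ha (h ▸ hbσ)
    have hd' : c.Disjoint (σ * τ) :=
      disjoint_iff_disjoint_support.2 (hστ_supp ▸ hd.disjoint_support)
    obtain ⟨hcyc, hcyc_supp⟩ := hd'.isCycle_mul_mul_swap hc hστ ha (hστ_supp ▸ hbσ)
    have hτ_swap : τ.Disjoint (swap a b) :=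
      disjoint_iff_disjoint_support.2 (by simp [support_swap hab, haτ, hbτ])
    have hassoc : c * σ * (τ * swap a b) = c * (σ * τ) * swap a b := by
      simp only [mul_assoc]
    refine ⟨τ * swap a b, ?_, ?_, hassoc ▸ hcyc, ?_⟩
    · rw [hτ_swap.cycleType_mul, hτ, (isCycle_swap hab).cycleType, card_support_swap hab,
        hd.cycleType_mul, hc.cycleType, Multiset.card_add, Multiset.card_singleton, ← Multiset.replicate_one, ← Multiset.replicate_add,
        Nat.sub_add_cancel (Nat.pos_of_ne_zero hk), Nat.add_sub_cancel_left]
    · refine (support_mul_le _ _).trans (sup_le ?_ ?_)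
      · exact hτσ.trans (hd.support_mul ▸ subset_union_right)
      · rw [support_swap hab, hd.support_mul]
        exact insert_subset (mem_union_left _ ha) (singleton_subset_iff.2 (mem_union_right _ hbσ))
    · rw [hassoc, hcyc_supp, hστ_supp, hd.support_mul]

end Equiv.Perm

/-- if `σ ∈ S_d` is a product of exactly `r` disjoint nontrivial cycles whose
supports cover all of `{1,…,d}` (no fixed points), then there is a product `τ` of `r − 1`
disjoint transpositions such that `σ·τ` is a single `d`-cycle. -/
theorem stmt8 (d r : ℕ) (hr : 1 ≤ r) (σ : Equiv.Perm (Fin d))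
    (hcycles : σ.cycleType.card = r)
    (hnofix : σ.support = Finset.univ) :
    ∃ τ : Equiv.Perm (Fin d),
      τ.cycleType = Multiset.replicate (r - 1) 2 ∧ (σ * τ).cycleType = {d} := by
  have hσ : σ ≠ 1 := by
    rintro rfl
    simp only [Equiv.Perm.cycleType_one, Multiset.card_zero] at hcycles
    omega
  obtain ⟨τ, hτ, -, hcyc, hsupp⟩ := Equiv.Perm.exists_swaps_mul_isCycle hσ
  refine ⟨τ, hcycles ▸ hτ, ?_⟩
  rw [hcyc.cycleType, hsupp, hnofix, Finset.card_univ, Fintype.card_fin]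
end

section
/- Let α > 0, C > 0 be constants and let (Γ_i)_{i∈ℕ} be a sequence of finite groups, each acting faithfully and transitively as an almost simple group on a finite set, such that in every coset of soc(Γ_i) in Γ_i, the proportion of fixed-point-free elements is at least α. Let G_m ≤ Γ_m ≀ ⋯ ≀ Γ_1 be subgroups with surjective natural projections G_m → G_{m−1}, such that each G_m has at most C orbits in its action, and such that for infinitely many m the kernel K_m of G_m → G_{m−1} contains soc(Γ_m)^{d₁⋯d_{m−1}} (where d_i is the degree of Γ_i). Then the proportion of fixed-point-free elements of G_m (in its action on d₁⋯d_m points) tends to 1 as m → ∞. -/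
/-- `N` is a minimal normal subgroup. -/
def IsMinNormal {G : Type*} [Group G] (N : Subgroup G) : Prop :=
  N.Normal ∧ N ≠ ⊥ ∧ ∀ M : Subgroup G, M.Normal → M ≠ ⊥ → M ≤ N → M = N

/-- The socle: the subgroup generated by all minimal normal subgroups. -/
def socle (G : Type*) [Group G] : Subgroup G :=
  ⨆ N ∈ {N : Subgroup G | IsMinNormal N}, N

/-- The tree of points: level `m` of the iterated wreath product acting on `d₁⋯d_m` points. -/
def Pt (d : ℕ → ℕ) : ℕ → Type
  | 0 => PUnit
  | m + 1 => Pt d m × Fin (d (m + 1))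

/-- The socle of a permutation group `Γ`, viewed inside the ambient symmetric group. -/
def socIn {T : Type*} (Γ : Subgroup (Equiv.Perm T)) : Subgroup (Equiv.Perm T) :=
  (socle ↥Γ).map Γ.subtype

instance PtFintype (d : ℕ → ℕ) : ∀ m, Fintype (Pt d m)
  | 0 => inferInstanceAs (Fintype PUnit)
  | m + 1 => @instFintypeProd _ _ (PtFintype d m) inferInstance

namespace St10

lemma card_pred_comp {G H : Type*} [Group G] [Group H] [Finite G] (f : G →* H)
    (hf : Function.Surjective f) (pred : H → Prop) :
    Nat.card {g : G // pred (f g)} = Nat.card {h : H // pred h} * Nat.card f.ker := by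
  classical
  obtain ⟨s, hs⟩ := hf.hasRightInverse
  have e : {g : G // pred (f g)} ≃ {h : H // pred h} × f.ker := by
    refine ⟨fun g => ⟨⟨f g.1, g.2⟩, ⟨(s (f g.1))⁻¹ * g.1, ?_⟩⟩,
      fun x => ⟨s x.1.1 * x.2.1, ?_⟩, fun g => ?_, fun x => ?_⟩
    · simp [MonoidHom.mem_ker, hs (f g.1)]
    · have h2 : f x.2.1 = 1 := x.2.2
      simp [h2, hs x.1.1, x.1.2]
    · simp
    · have h2 : f x.2.1 = 1 := x.2.2
      ext
      · simp [h2, hs x.1.1]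
      · simp [h2, hs x.1.1]
  rw [Nat.card_congr e, Nat.card_prod]

lemma card_sigma' {ι : Type*} [Fintype ι] (β : ι → Type*) [∀ i, Finite (β i)] :
    Nat.card (Σ i, β i) = ∑ i, Nat.card (β i) := by
  classical
  have : ∀ i, Fintype (β i) := fun i => Fintype.ofFinite _
  rw [Nat.card_eq_fintype_card, Fintype.card_sigma]
  exact Finset.sum_congr rfl fun i _ => (Nat.card_eq_fintype_card).symm

lemma card_split {X : Type*} [Finite X] (P Q : X → Prop) :
    Nat.card {x : X // P x ∧ Q x} + Nat.card {x : X // P x ∧ ¬ Q x} = Nat.card {x : X // P x} := by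
  classical
  rw [← Nat.card_sum]
  refine Nat.card_congr ?_
  calc ({x : X // P x ∧ Q x} ⊕ {x : X // P x ∧ ¬ Q x})
      ≃ ({x : {y : X // P y} // Q x.1} ⊕ {x : {y : X // P y} // ¬ Q x.1}) :=
        Equiv.sumCongr (Equiv.subtypeSubtypeEquivSubtypeInter P Q).symm
          (Equiv.subtypeSubtypeEquivSubtypeInter P (fun y => ¬ Q y)).symm
    _ ≃ {y : X // P y} := Equiv.sumCompl _

lemma card_split' {X : Type*} [Finite X] (Q : X → Prop) :
    Nat.card {x : X // Q x} + Nat.card {x : X // ¬ Q x} = Nat.card X := by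
  classical
  rw [← Nat.card_sum]
  exact Nat.card_congr (Equiv.sumCompl _)

lemma burnside {T : Type*} [Fintype T] (B : Subgroup (Equiv.Perm T)) [Fintype ↥B] (C : ℕ)
    (h : Nat.card (Quot (fun p q : T => ∃ g ∈ B, g p = q)) ≤ C) :
    ∑ b : ↥B, Nat.card {p : T // (b : Equiv.Perm T) p = p} ≤ C * Nat.card ↥B := by
  classical
  have e : Quotient (MulAction.orbitRel ↥B T) ≃ Quot (fun p q : T => ∃ g ∈ B, g p = q) := by
    refine ⟨Quot.map id ?_, Quot.map id ?_, ?_, ?_⟩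
    · rintro a b ⟨g, hg⟩
      simp only at hg
      refine ⟨g.1⁻¹, inv_mem g.2, ?_⟩
      have : g.1 b = a := hg
      simp [← this]
    · rintro a b ⟨g, hg, hab⟩
      refine ⟨⟨g, hg⟩⁻¹, ?_⟩
      show g⁻¹ b = a
      simp [← hab]
    · intro q; induction q using Quot.ind; rfl
    · intro q; induction q using Quot.ind; rfl
  have hb := MulAction.sum_card_fixedBy_eq_card_orbits_mul_card_group ↥B T
  have hcard : ∀ b : ↥B,
      Fintype.card (MulAction.fixedBy T b) = Nat.card {p : T // (b : Equiv.Perm T) p = p} := by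
    intro b
    rw [Nat.card_eq_fintype_card]
    refine Fintype.card_congr (Equiv.subtypeEquivRight fun p => ?_)
    exact ⟨fun hp => hp, fun hp => hp⟩
  calc ∑ b : ↥B, Nat.card {p : T // (b : Equiv.Perm T) p = p}
      = ∑ b : ↥B, Fintype.card (MulAction.fixedBy T b) :=
        Finset.sum_congr rfl fun b _ => (hcard b).symm
    _ = Fintype.card (Quotient (MulAction.orbitRel ↥B T)) * Fintype.card ↥B := hb
    _ ≤ C * Nat.card ↥B := by
        rw [Nat.card_eq_fintype_card]
        refine Nat.mul_le_mul_right _ ?_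
        rw [← Nat.card_eq_fintype_card, Nat.card_congr e]
        exact h

lemma exists_proj {T D : Type*} [Nonempty D]
    (A : Subgroup (Equiv.Perm (T × D))) (B : Subgroup (Equiv.Perm T))
    (hw : ∀ g ∈ A, ∃ b ∈ B, ∃ u : T → Equiv.Perm D,
      ∀ (p : T) (x : D), g (p, x) = (b p, u p x))
    (hp : ∀ b ∈ B, ∃ g ∈ A, ∃ u : T → Equiv.Perm D,
      ∀ (p : T) (x : D), g (p, x) = (b p, u p x)) :
    ∃ π : ↥A →* ↥B, Function.Surjective π ∧
      ∀ (g : ↥A) (p : T) (x : D),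
        ((g : Equiv.Perm (T × D)) (p, x)).1 = (π g : Equiv.Perm T) p := by
  classical
  have key : ∀ g : ↥A, ∃ b : ↥B, ∀ (p : T) (x : D),
      ((g : Equiv.Perm (T × D)) (p, x)).1 = (b : Equiv.Perm T) p := by
    intro g
    obtain ⟨b, hb, u, hu⟩ := hw g.1 g.2
    exact ⟨⟨b, hb⟩, fun p x => by rw [hu p x]⟩
  choose π hπ using key
  have uniq : ∀ (g : ↥A) (b : ↥B), (∀ (p : T) (x : D),
      ((g : Equiv.Perm (T × D)) (p, x)).1 = (b : Equiv.Perm T) p) → π g = b := by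
    intro g b hb
    ext p
    obtain ⟨x⟩ := ‹Nonempty D›
    rw [← hπ g p x, hb p x]
  refine ⟨MonoidHom.mk' π ?_, ?_, hπ⟩
  · intro g h
    refine uniq (g * h) (π g * π h) (fun p x => ?_)
    have h1 : ((g * h : ↥A) : Equiv.Perm (T × D)) (p, x)
        = (g : Equiv.Perm (T × D)) ((h : Equiv.Perm (T × D)) (p, x)) := rfl
    have h2 := hπ h p x
    have h3 : (h : Equiv.Perm (T × D)) (p, x)
        = ((π h : Equiv.Perm T) p, ((h : Equiv.Perm (T × D)) (p, x)).2) := by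
      rw [← h2]
    rw [h1, h3, hπ g _ _]
    rfl
  · intro b
    obtain ⟨g, hg, u, hu⟩ := hp b.1 b.2
    exact ⟨⟨g, hg⟩, uniq ⟨g, hg⟩ b (fun p x => by rw [hu p x])⟩

lemma coset_count {D : Type*} [Finite D] (Sg : Subgroup (Equiv.Perm D)) (v : Equiv.Perm D)
    (α : ℚ)
    (h : α ≤ (Nat.card {h : Equiv.Perm D //
          h ∈ (fun x => v * x) '' (Sg : Set (Equiv.Perm D)) ∧ ∀ y, h y ≠ y} : ℚ) /
        (Nat.card ↥Sg : ℚ)) :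
    α * (Nat.card ↥Sg : ℚ) ≤ (Nat.card {σ : ↥Sg // ∀ y, v (σ.1 y) ≠ y} : ℚ) := by
  have hpos : 0 < (Nat.card ↥Sg : ℚ) := by
    exact_mod_cast Nat.card_pos
  rw [le_div_iff₀ hpos] at h
  refine le_trans h (le_of_eq ?_)
  norm_cast
  refine Nat.card_congr ⟨fun h => ⟨⟨v⁻¹ * h.1, ?_⟩, fun y hy => ?_⟩,
    fun σ => ⟨v * σ.1.1, ⟨σ.1.1, σ.1.2, rfl⟩, σ.2⟩, fun h => ?_, fun σ => ?_⟩
  · obtain ⟨⟨σ, hσ, hvσ⟩, _⟩ := h.2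
    simpa [← hvσ] using hσ
  · exact h.2.2 y (by simpa using hy)
  · ext : 1; simp
  · ext : 2; simp

lemma pi_count {T D : Type*} [Fintype T] [Finite D] (Sg : Subgroup (Equiv.Perm D))
    (α : ℚ) (hα0 : 0 ≤ α) (F : T → Prop) (u : T → Equiv.Perm D)
    (hco : ∀ p, F p →
      α * (Nat.card ↥Sg : ℚ) ≤ (Nat.card {σ : ↥Sg // ∀ y, u p (σ.1 y) ≠ y} : ℚ)) :
    α ^ (Nat.card {p : T // F p}) *
      (Nat.card {f : T → Equiv.Perm D // ∀ p, f p ∈ Sg} : ℚ) ≤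
    (Nat.card {s : {f : T → Equiv.Perm D // ∀ p, f p ∈ Sg} //
        ∀ p, F p → ∀ y, u p (s.1 p y) ≠ y} : ℚ) := by
  classical
  set Q : ∀ p : T, ↥Sg → Prop := fun p σ => F p → ∀ y, u p (σ.1 y) ≠ y with hQ
  have e1 : {s : {f : T → Equiv.Perm D // ∀ p, f p ∈ Sg} //
      ∀ p, F p → ∀ y, u p (s.1 p y) ≠ y} ≃ ∀ p, {σ : ↥Sg // Q p σ} := by
    calc {s : {f : T → Equiv.Perm D // ∀ p, f p ∈ Sg} //
            ∀ p, F p → ∀ y, u p (s.1 p y) ≠ y}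
        ≃ {f : T → Equiv.Perm D //
            (∀ p, f p ∈ Sg) ∧ ∀ p, F p → ∀ y, u p (f p y) ≠ y} :=
          Equiv.subtypeSubtypeEquivSubtypeInter
            (fun f : T → Equiv.Perm D => ∀ p, f p ∈ Sg)
            (fun f => ∀ p, F p → ∀ y, u p (f p y) ≠ y)
      _ ≃ {f : T → Equiv.Perm D //
            ∀ p, f p ∈ Sg ∧ (F p → ∀ y, u p (f p y) ≠ y)} :=
          Equiv.subtypeEquivRight fun f => ⟨fun ⟨h1, h2⟩ p => ⟨h1 p, h2 p⟩,
            fun h => ⟨fun p => (h p).1, fun p => (h p).2⟩⟩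
      _ ≃ ∀ p, {σ : Equiv.Perm D // σ ∈ Sg ∧ (F p → ∀ y, u p (σ y) ≠ y)} :=
          Equiv.subtypePiEquivPi
            (p := fun p σ => σ ∈ Sg ∧ (F p → ∀ y, u p (σ y) ≠ y))
      _ ≃ ∀ p, {σ : ↥Sg // Q p σ} :=
          Equiv.piCongrRight fun p =>
            (Equiv.subtypeSubtypeEquivSubtypeInter
              (fun σ : Equiv.Perm D => σ ∈ Sg)
              (fun σ => F p → ∀ y, u p (σ y) ≠ y)).symm
  have e2 : {f : T → Equiv.Perm D // ∀ p, f p ∈ Sg} ≃ ∀ p : T, ↥Sg :=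
    Equiv.subtypePiEquivPi
  rw [Nat.card_congr e1, Nat.card_congr e2, Nat.card_pi, Nat.card_pi]
  push_cast
  have hT : (Nat.card {p : T // F p}) = (Finset.univ.filter F).card := by
    rw [Nat.card_eq_fintype_card, Fintype.card_subtype]
  calc α ^ (Nat.card {p : T // F p}) * ∏ p : T, (Nat.card ↥Sg : ℚ)
      = ∏ p : T, (if F p then α else 1) * (Nat.card ↥Sg : ℚ) := by
        rw [Finset.prod_mul_distrib, Finset.prod_ite, Finset.prod_const_one, Finset.prod_const,
          Finset.prod_const, mul_one, hT]
    _ ≤ ∏ p : T, (Nat.card {σ : ↥Sg // Q p σ} : ℚ) := by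
        refine Finset.prod_le_prod (fun p _ => ?_) (fun p _ => ?_)
        · positivity
        · by_cases hF : F p
          · simp only [hF, if_true]
            refine le_trans (hco p hF) (le_of_eq ?_)
            norm_cast
            refine Nat.card_congr (Equiv.subtypeEquivRight fun σ => ?_)
            simp [hQ, hF]
          · simp only [hF, if_false, one_mul]
            norm_cast
            exact le_of_eq (Nat.card_congr (Equiv.subtypeUnivEquiv fun σ => by
              simp [hQ, hF])).symm

lemma fiber_bound {T D : Type*} [Fintype T] [Fintype D] [Nonempty D]
    (α : ℚ) (hα0 : 0 ≤ α)
    (Γ' Sg : Subgroup (Equiv.Perm D))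
    (A : Subgroup (Equiv.Perm (T × D))) (B : Subgroup (Equiv.Perm T))
    (π : ↥A →* ↥B) (hsurj : Function.Surjective π)
    (hw : ∀ g : ↥A, ∃ u : T → Equiv.Perm D, (∀ p, u p ∈ Γ') ∧
        ∀ (p : T) (x : D), (g : Equiv.Perm (T × D)) (p, x) = ((π g : Equiv.Perm T) p, u p x))
    (hS : ∀ u : T → Equiv.Perm D, (∀ p, u p ∈ Sg) →
        (Equiv.prodShear (Equiv.refl T) u : Equiv.Perm (T × D)) ∈ A)
    (hco : ∀ v ∈ Γ',
      α * (Nat.card ↥Sg : ℚ) ≤ (Nat.card {σ : ↥Sg // ∀ y, v (σ.1 y) ≠ y} : ℚ))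
    (b : ↥B) :
    α ^ (Nat.card {p : T // (b : Equiv.Perm T) p = p}) * (Nat.card π.ker : ℚ) ≤
      (Nat.card {g : ↥A // π g = b ∧ ∀ z, (g : Equiv.Perm (T × D)) z ≠ z} : ℚ) := by
  classical
  haveI : Fintype ↥A := Fintype.ofFinite _
  set Sfun := {f : T → Equiv.Perm D // ∀ p, f p ∈ Sg} with hSfun
  haveI : Nonempty Sfun := ⟨⟨fun _ => 1, fun _ => one_mem _⟩⟩
  let σt : Sfun → ↥A := fun s => ⟨Equiv.prodShear (Equiv.refl T) s.1, hS s.1 s.2⟩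
  have happ : ∀ (s : Sfun) (p : T) (y : D),
      ((σt s : ↥A) : Equiv.Perm (T × D)) (p, y) = (p, s.1 p y) := fun s p y => rfl
  have hker : ∀ s : Sfun, π (σt s) = 1 := by
    intro s
    obtain ⟨y⟩ := ‹Nonempty D›
    refine Subtype.ext (Equiv.ext fun p => ?_)
    obtain ⟨u, hu, huf⟩ := hw (σt s)
    have h2 := huf p y
    rw [happ] at h2
    have h3 : p = (π (σt s) : Equiv.Perm T) p := congrArg Prod.fst h2
    simpa using h3.symm
  set j := Nat.card {p : T // (b : Equiv.Perm T) p = p} with hj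
  -- key pointwise estimate
  have key : ∀ x : ↥A, π x = b →
      α ^ j * (Nat.card Sfun : ℚ) ≤
      (Nat.card {s : Sfun // ∀ z, ((x * σt s : ↥A) : Equiv.Perm (T × D)) z ≠ z} : ℚ) := by
    intro x hx
    obtain ⟨u, hu, huf⟩ := hw x
    have hiff : ∀ s : Sfun, (∀ z, ((x * σt s : ↥A) : Equiv.Perm (T × D)) z ≠ z) ↔
        (∀ p, (b : Equiv.Perm T) p = p → ∀ y, u p (s.1 p y) ≠ y) := by
      intro s
      have hformula : ∀ (p : T) (y : D), ((x * σt s : ↥A) : Equiv.Perm (T × D)) (p, y)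
          = ((b : Equiv.Perm T) p, u p (s.1 p y)) := by
        intro p y
        have : ((x * σt s : ↥A) : Equiv.Perm (T × D)) (p, y)
            = (x : Equiv.Perm (T × D)) (p, s.1 p y) := rfl
        rw [this, huf p (s.1 p y), hx]
      constructor
      · intro h p hp y hy
        exact h (p, y) (by rw [hformula p y, hp, hy])
      · rintro h ⟨p, y⟩ hz
        rw [hformula p y] at hz
        have hb : (b : Equiv.Perm T) p = p := congrArg Prod.fst hz
        exact h p hb y (congrArg Prod.snd hz)
    refine le_trans (pi_count Sg α hα0 (fun p => (b : Equiv.Perm T) p = p) u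
      (fun p _ => hco (u p) (hu p))) (le_of_eq ?_)
    norm_cast
    exact Nat.card_congr (Equiv.subtypeEquivRight fun s => (hiff s).symm)
  -- counting the fiber
  have hKcard : Nat.card {x : ↥A // π x = b} = Nat.card π.ker := by
    rw [card_pred_comp π hsurj (fun h => h = b)]
    haveI : Unique {h : ↥B // h = b} := ⟨⟨⟨b, rfl⟩⟩, by rintro ⟨h, rfl⟩; rfl⟩
    rw [Nat.card_unique, one_mul]
  -- step 1 : lower bound the double count
  have step1 : α ^ j * (Nat.card π.ker : ℚ) * (Nat.card Sfun : ℚ)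
      ≤ ∑ x : ↥A, (Nat.card {s : Sfun //
          π x = b ∧ ∀ z, ((x * σt s : ↥A) : Equiv.Perm (T × D)) z ≠ z} : ℚ) := by
    have hterm : ∀ x : ↥A, (if π x = b then α ^ j * (Nat.card Sfun : ℚ) else 0) ≤
        (Nat.card {s : Sfun //
          π x = b ∧ ∀ z, ((x * σt s : ↥A) : Equiv.Perm (T × D)) z ≠ z} : ℚ) := by
      intro x
      by_cases hx : π x = b
      · rw [if_pos hx]
        refine le_trans (key x hx) (le_of_eq ?_)
        norm_cast
        exact Nat.card_congr (Equiv.subtypeEquivRight fun s => (and_iff_right hx).symm)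
      · rw [if_neg hx]
        positivity
    refine le_trans (le_of_eq ?_) (Finset.sum_le_sum fun x _ => hterm x)
    rw [← Finset.sum_filter, Finset.sum_const, nsmul_eq_mul]
    have hfil : (Finset.univ.filter (fun x : ↥A => π x = b)).card
        = Nat.card {x : ↥A // π x = b} := by
      rw [Nat.card_eq_fintype_card, Fintype.card_subtype]
    rw [hfil, hKcard]
    ring
  -- step 2 : the double count equals fpf count times |Sfun|
  have step2 : ∑ x : ↥A, Nat.card {s : Sfun //
        π x = b ∧ ∀ z, ((x * σt s : ↥A) : Equiv.Perm (T × D)) z ≠ z}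
      = Nat.card {g : ↥A // π g = b ∧ ∀ z, (g : Equiv.Perm (T × D)) z ≠ z}
        * Nat.card Sfun := by
    rw [← card_sigma' (fun x : ↥A => {s : Sfun //
        π x = b ∧ ∀ z, ((x * σt s : ↥A) : Equiv.Perm (T × D)) z ≠ z}), ← Nat.card_prod]
    refine Nat.card_congr ?_
    let e0 : ↥A × Sfun ≃ ↥A × Sfun :=
      ⟨fun q => (q.1 * σt q.2, q.2), fun q => (q.1 * (σt q.2)⁻¹, q.2),
        fun q => by simp, fun q => by simp⟩
    calc (Σ x : ↥A, {s : Sfun //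
            π x = b ∧ ∀ z, ((x * σt s : ↥A) : Equiv.Perm (T × D)) z ≠ z})
        ≃ {q : ↥A × Sfun //
            π q.1 = b ∧ ∀ z, ((q.1 * σt q.2 : ↥A) : Equiv.Perm (T × D)) z ≠ z} :=
          (Equiv.subtypeProdEquivSigmaSubtype fun (x : ↥A) (s : Sfun) =>
            π x = b ∧ ∀ z, ((x * σt s : ↥A) : Equiv.Perm (T × D)) z ≠ z).symm
      _ ≃ {q : ↥A × Sfun // π q.1 = b ∧ ∀ z, (q.1 : Equiv.Perm (T × D)) z ≠ z} := by
          refine Equiv.subtypeEquiv e0 fun q => ?_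
          have hπs : π (q.1 * σt q.2) = π q.1 := by rw [map_mul, hker, mul_one]
          have he0 : (e0 q).1 = q.1 * σt q.2 := rfl
          rw [he0, hπs]
      _ ≃ {g : ↥A // π g = b ∧ ∀ z, (g : Equiv.Perm (T × D)) z ≠ z} × Sfun :=
          Equiv.prodSubtypeFstEquivSubtypeProd (α := ↥A) (β := Sfun)
            (p := fun g => π g = b ∧ ∀ z, (g : Equiv.Perm (T × D)) z ≠ z)
  have hScpos : 0 < (Nat.card Sfun : ℚ) := by exact_mod_cast Nat.card_pos
  refine le_of_mul_le_mul_right ?_ hScpos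
  refine le_trans step1 (le_of_eq ?_)
  exact_mod_cast step2

end St10

set_option maxHeartbeats 2000000

/-- for almost simple transitive groups `Γ_i` in which every coset of the socle
has a proportion of at least `α > 0` of fixed-point-free elements, and subgroups
`G_m ≤ Γ_m ≀ ⋯ ≀ Γ_1` with surjective projections `G_m → G_{m−1}`, at most `C` orbits, and
kernels containing `soc(Γ_m)^{d₁⋯d_{m−1}}` for infinitely many `m`, the proportion of
fixed-point-free elements of `G_m` tends to `1`. -/
theorem stmt10 (α : ℚ) (hα : 0 < α) (C : ℕ) (hC : 0 < C)
    (d : ℕ → ℕ) (hd : ∀ i, 1 ≤ d i)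
    (Γ : ∀ i : ℕ, Subgroup (Equiv.Perm (Fin (d i))))
    -- each `Γ i` is almost simple (with nonabelian simple socle-witness `L`)
    (hAS : ∀ i, ∃ L : Subgroup ↥(Γ i), L.Normal ∧ IsSimpleGroup ↥L ∧
      (∃ a b : ↥L, a * b ≠ b * a) ∧
      Subgroup.centralizer (L : Set ↥(Γ i)) = ⊥ ∧ (socle ↥(Γ i)) = L)
    -- each `Γ i` is transitive
    (htrans : ∀ i, ∀ a b : Fin (d i), ∃ g ∈ Γ i, g a = b)
    -- fixed-point-free proportion at least `α` in every coset of the socle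
    (hcoset : ∀ i, ∀ g ∈ Γ i,
      α ≤ (Nat.card {h : Equiv.Perm (Fin (d i)) //
            h ∈ (fun x => g * x) '' (socIn (Γ i) : Set (Equiv.Perm (Fin (d i)))) ∧
            ∀ y, h y ≠ y} : ℚ) / (Nat.card ↥(socIn (Γ i)) : ℚ))
    (G : ∀ m : ℕ, Subgroup (Equiv.Perm (Pt d m)))
    -- `G (m+1)` lies in the wreath product `Γ_{m+1} ≀ G m` over the block structure
    (hwreath : ∀ m, ∀ g ∈ G (m + 1), ∃ b ∈ G m,
      ∃ u : Pt d m → Equiv.Perm (Fin (d (m + 1))), (∀ p, u p ∈ Γ (m + 1)) ∧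
        ∀ (p : Pt d m) (x : Fin (d (m + 1))), g (p, x) = (b p, u p x))
    -- the projection `G (m+1) → G m` is surjective
    (hproj : ∀ m, ∀ b ∈ G m, ∃ g ∈ G (m + 1),
      ∃ u : Pt d m → Equiv.Perm (Fin (d (m + 1))), (∀ p, u p ∈ Γ (m + 1)) ∧
        ∀ (p : Pt d m) (x : Fin (d (m + 1))), g (p, x) = (b p, u p x))
    -- `G m` has at most `C` orbits
    (horb : ∀ m, Nat.card (Quot (fun p q : Pt d m => ∃ g ∈ G m, g p = q)) ≤ C)
    -- the kernel contains `soc(Γ_{m+1})^{d₁⋯d_m}` for infinitely many `m`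
    (hlarge : ∀ N : ℕ, ∃ m, N ≤ m ∧
      ∀ u : Pt d m → Equiv.Perm (Fin (d (m + 1))),
        (∀ p, u p ∈ socIn (Γ (m + 1))) →
        (Equiv.prodShear (Equiv.refl (Pt d m)) u : Equiv.Perm (Pt d (m + 1))) ∈ G (m + 1)) :
    Filter.Tendsto
      (fun m => (Nat.card {g : Equiv.Perm (Pt d m) // g ∈ G m ∧ ∀ p, g p ≠ p} : ℚ) /
        (Nat.card ↥(G m) : ℚ)) Filter.atTop (nhds 1) := by
  classical
  have hne : ∀ i, Nonempty (Fin (d i)) := fun i => ⟨⟨0, hd i⟩⟩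
  set nf : ℕ → ℕ := fun m =>
    Nat.card {g : ↥(G m) // ∃ z, (g : Equiv.Perm (Pt d m)) z = z} with hnf
  set tot : ℕ → ℕ := fun m => Nat.card ↥(G m) with htot
  have htotpos : ∀ m, 0 < tot m := fun m => Nat.card_pos
  have htotposQ : ∀ m, 0 < (tot m : ℚ) := fun m => by exact_mod_cast htotpos m
  set pr : ℕ → ℚ := fun m => (nf m : ℚ) / (tot m : ℚ) with hpr
  have hp0 : ∀ m, 0 ≤ pr m := fun m => by positivity
  -- the target equals 1 - pr m
  have htarget : ∀ m, (Nat.card {g : Equiv.Perm (Pt d m) // g ∈ G m ∧ ∀ p, g p ≠ p} : ℚ) /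
      (Nat.card ↥(G m) : ℚ) = 1 - pr m := by
    intro m
    have hsplit := St10.card_split' (X := ↥(G m))
      (fun g => ∃ z, (g : Equiv.Perm (Pt d m)) z = z)
    have hcongr : Nat.card {g : Equiv.Perm (Pt d m) // g ∈ G m ∧ ∀ p, g p ≠ p}
        = Nat.card {g : ↥(G m) // ¬ ∃ z, (g : Equiv.Perm (Pt d m)) z = z} := by
      refine Nat.card_congr ?_
      calc {g : Equiv.Perm (Pt d m) // g ∈ G m ∧ ∀ p, g p ≠ p}
          ≃ {x : ↥(G m) // ∀ z, (x : Equiv.Perm (Pt d m)) z ≠ z} :=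
            (Equiv.subtypeSubtypeEquivSubtypeInter (· ∈ G m) (fun g => ∀ z, g z ≠ z)).symm
        _ ≃ {g : ↥(G m) // ¬ ∃ z, (g : Equiv.Perm (Pt d m)) z = z} :=
            Equiv.subtypeEquivRight fun x => by simp [not_exists]
    rw [hcongr]
    have hval : (Nat.card {g : ↥(G m) // ¬ ∃ z, (g : Equiv.Perm (Pt d m)) z = z} : ℚ)
        = tot m - nf m := by
      have hcast := congrArg (Nat.cast (R := ℚ)) hsplit
      push_cast at hcast
      linarith
    rw [hval]
    have htoteq : (Nat.card ↥(G m) : ℚ) = ((tot m : ℕ) : ℚ) := rfl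
    rw [htoteq, sub_div, div_self (ne_of_gt (htotposQ m))]
  -- projections
  have hπ : ∀ m, ∃ π : ↥(G (m+1)) →* ↥(G m), Function.Surjective π ∧
      ∀ (g : ↥(G (m+1))) (q : Pt d m) (x : Fin (d (m+1))),
        ((g : Equiv.Perm (Pt d (m+1))) (q, x)).1 = (π g : Equiv.Perm (Pt d m)) q := by
    intro m
    haveI := hne (m+1)
    exact St10.exists_proj (T := Pt d m) (D := Fin (d (m+1))) (G (m+1)) (G m)
      (fun g hg => by
        obtain ⟨b, hb, u, hu, huf⟩ := hwreath m g hg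
        exact ⟨b, hb, u, huf⟩)
      (fun b hb => by
        obtain ⟨g, hg, u, hu, huf⟩ := hproj m b hb
        exact ⟨g, hg, u, huf⟩)
  choose π hsurj hchar using hπ
  -- wreath decomposition relative to π
  have hwπ : ∀ m (g : ↥(G (m+1))), ∃ u : Pt d m → Equiv.Perm (Fin (d (m+1))),
      (∀ q, u q ∈ Γ (m+1)) ∧ ∀ (q : Pt d m) (x : Fin (d (m+1))),
        (g : Equiv.Perm (Pt d (m+1))) (q, x) = ((π m g : Equiv.Perm (Pt d m)) q, u q x) := by
    intro m g
    obtain ⟨b, hb, u, hu, huf⟩ := hwreath m g.1 g.2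
    refine ⟨u, hu, fun q x => ?_⟩
    have h1 : b q = (π m g : Equiv.Perm (Pt d m)) q := by
      rw [← hchar m g q x, huf q x]
    rw [huf q x, h1]
  -- cardinality recursions
  have htotrec : ∀ m, tot (m+1) = tot m * Nat.card (π m).ker := by
    intro m
    calc tot (m+1) = Nat.card {g : ↥(G (m+1)) // True} :=
          (Nat.card_congr (Equiv.subtypeUnivEquiv fun _ => trivial)).symm
      _ = Nat.card {h : ↥(G m) // True} * Nat.card (π m).ker :=
          St10.card_pred_comp (π m) (hsurj m) (fun _ => True)
      _ = tot m * Nat.card (π m).ker := by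
          rw [Nat.card_congr (Equiv.subtypeUnivEquiv (fun _ => trivial) :
            {h : ↥(G m) // True} ≃ ↥(G m))]
  have hKpos : ∀ m, 0 < (Nat.card (π m).ker : ℚ) := fun m => by exact_mod_cast Nat.card_pos
  have hnfrec : ∀ m, nf (m+1) ≤ nf m * Nat.card (π m).ker := by
    intro m
    have hle : nf (m+1) ≤ Nat.card {g : ↥(G (m+1)) //
        ∃ q, ((π m) g : Equiv.Perm (Pt d m)) q = q} := by
      refine Nat.card_le_card_of_injective (fun g => ⟨g.1, ?_⟩) ?_
      · obtain ⟨⟨q, x⟩, hz⟩ := g.2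
        exact ⟨q, by rw [← hchar m g.1 q x, hz]⟩
      · intro a b hab
        simp only [Subtype.mk.injEq] at hab
        exact Subtype.ext hab
    calc nf (m+1) ≤ _ := hle
      _ = nf m * Nat.card (π m).ker :=
        St10.card_pred_comp (π m) (hsurj m)
          (fun b => ∃ q, (b : Equiv.Perm (Pt d m)) q = q)
  have hmono : ∀ m, pr (m+1) ≤ pr m := by
    intro m
    have hK := hKpos m
    have h1 : (nf (m+1) : ℚ) ≤ (nf m : ℚ) * (Nat.card (π m).ker : ℚ) := by
      exact_mod_cast hnfrec m
    have h2 : (tot (m+1) : ℚ) = (tot m : ℚ) * (Nat.card (π m).ker : ℚ) := by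
      exact_mod_cast htotrec m
    show (nf (m+1) : ℚ) / (tot (m+1) : ℚ) ≤ (nf m : ℚ) / (tot m : ℚ)
    rw [h2, div_le_div_iff₀ (by nlinarith [htotposQ m]) (htotposQ m)]
    nlinarith [htotposQ m, (by positivity : (0:ℚ) ≤ (nf m : ℚ))]
  have hanti : ∀ {a b : ℕ}, a ≤ b → pr b ≤ pr a := by
    intro a b h
    induction b, h using Nat.le_induction with
    | base => exact le_rfl
    | succ n hn ih => exact (hmono n).trans ih
  have hα1 : α ≤ 1 := by
    have h := hcoset 0 1 (one_mem _)
    have hpos : 0 < (Nat.card ↥(socIn (Γ 0)) : ℚ) := by exact_mod_cast Nat.card_pos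
    refine le_trans h ?_
    rw [div_le_one hpos]
    have hinj : Function.Injective
        (fun h : {h : Equiv.Perm (Fin (d 0)) //
            h ∈ (fun x => (1 : Equiv.Perm (Fin (d 0))) * x) ''
              (socIn (Γ 0) : Set (Equiv.Perm (Fin (d 0)))) ∧ ∀ y, h y ≠ y} =>
          (⟨h.1, by
            obtain ⟨⟨σ, hσ, hvσ⟩, _⟩ := h.2
            simpa [← hvσ] using hσ⟩ : ↥(socIn (Γ 0)))) :=
      fun a b hab => by
        simp only [Subtype.mk.injEq] at hab
        exact Subtype.ext hab
    exact_mod_cast Nat.card_le_card_of_injective _ hinj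
  -- key inequality at a "large kernel" level
  have hstep : ∀ (t : ℕ) (m : ℕ),
      (∀ u : Pt d m → Equiv.Perm (Fin (d (m + 1))),
        (∀ q, u q ∈ socIn (Γ (m + 1))) →
        (Equiv.prodShear (Equiv.refl (Pt d m)) u : Equiv.Perm (Pt d (m + 1))) ∈ G (m + 1)) →
      pr (m+1) ≤ (1 - α ^ t) * pr m + α ^ t * C / (t+1) := by
    intro t m hSm
    haveI := hne (m+1)
    haveI : Fintype ↥(G m) := Fintype.ofFinite _
    set Sg := socIn (Γ (m+1)) with hSg
    set K := Nat.card (π m).ker with hKdef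
    have hK : 0 < (K : ℚ) := hKpos m
    set fix : ↥(G m) → ℕ :=
      fun b => Nat.card {q : Pt d m // (b : Equiv.Perm (Pt d m)) q = q} with hfix
    have hco : ∀ v ∈ Γ (m+1), α * (Nat.card ↥Sg : ℚ) ≤
        (Nat.card {σ : ↥Sg // ∀ y, v (σ.1 y) ≠ y} : ℚ) :=
      fun v hv => St10.coset_count Sg v α (hcoset (m+1) v hv)
    have hfib : ∀ b : ↥(G m), α ^ (fix b) * (K : ℚ) ≤
        (Nat.card {g : ↥(G (m+1)) // π m g = b ∧
          ∀ z, (g : Equiv.Perm (Pt d (m+1))) z ≠ z} : ℚ) := by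
      intro b
      exact St10.fiber_bound (T := Pt d m) (D := Fin (d (m+1))) α (le_of_lt hα)
        (Γ (m+1)) Sg (G (m+1)) (G m) (π m) (hsurj m) (hwπ m) hSm hco b
    have hfibcard : ∀ b : ↥(G m), Nat.card {g : ↥(G (m+1)) // π m g = b} = K := by
      intro b
      rw [St10.card_pred_comp (π m) (hsurj m) (fun h => h = b)]
      haveI : Unique {h : ↥(G m) // h = b} := ⟨⟨⟨b, rfl⟩⟩, by rintro ⟨h, rfl⟩; rfl⟩
      rw [Nat.card_unique, one_mul]
    have hfibsplit : ∀ b : ↥(G m),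
        (Nat.card {g : ↥(G (m+1)) // π m g = b ∧
          ∃ z, (g : Equiv.Perm (Pt d (m+1))) z = z} : ℚ) ≤ (K : ℚ) - α ^ (fix b) * K := by
      intro b
      have hsp := St10.card_split (X := ↥(G (m+1))) (fun g => π m g = b)
        (fun g => ∀ z, (g : Equiv.Perm (Pt d (m+1))) z ≠ z)
      have hcongr : Nat.card {g : ↥(G (m+1)) // π m g = b ∧
            ¬ ∀ z, (g : Equiv.Perm (Pt d (m+1))) z ≠ z}
          = Nat.card {g : ↥(G (m+1)) // π m g = b ∧
            ∃ z, (g : Equiv.Perm (Pt d (m+1))) z = z} :=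
        Nat.card_congr (Equiv.subtypeEquivRight fun g => by
          simp [not_forall, not_ne_iff])
      rw [hcongr, hfibcard b] at hsp
      have hcast := congrArg (Nat.cast (R := ℚ)) hsp
      push_cast at hcast
      linarith [hfib b]
    have hzero : ∀ b : ↥(G m), fix b = 0 →
        Nat.card {g : ↥(G (m+1)) // π m g = b ∧
          ∃ z, (g : Equiv.Perm (Pt d (m+1))) z = z} = 0 := by
      intro b hb
      have : IsEmpty {g : ↥(G (m+1)) // π m g = b ∧
          ∃ z, (g : Equiv.Perm (Pt d (m+1))) z = z} := by
        refine ⟨fun g => ?_⟩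
        obtain ⟨hgb, ⟨q, x⟩, hz⟩ := g.2
        have hq : (b : Equiv.Perm (Pt d m)) q = q := by
          rw [← hgb, ← hchar m g.1 q x, hz]
        have : 0 < fix b := Nat.card_pos_iff.mpr ⟨⟨⟨q, hq⟩⟩, inferInstance⟩
        omega
      exact Nat.card_eq_zero.mpr (Or.inl this)
    have hdecomp : nf (m+1) = ∑ b : ↥(G m),
        Nat.card {g : ↥(G (m+1)) // π m g = b ∧
          ∃ z, (g : Equiv.Perm (Pt d (m+1))) z = z} := by
      rw [← St10.card_sigma']
      refine Nat.card_congr ?_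
      calc {g : ↥(G (m+1)) // ∃ z, (g : Equiv.Perm (Pt d (m+1))) z = z}
          ≃ (Σ b : ↥(G m), {x : {g : ↥(G (m+1)) //
              ∃ z, (g : Equiv.Perm (Pt d (m+1))) z = z} // π m x.1 = b}) :=
            (Equiv.sigmaFiberEquiv (fun x : {g : ↥(G (m+1)) //
              ∃ z, (g : Equiv.Perm (Pt d (m+1))) z = z} => π m x.1)).symm
        _ ≃ (Σ b : ↥(G m), {g : ↥(G (m+1)) // π m g = b ∧
              ∃ z, (g : Equiv.Perm (Pt d (m+1))) z = z}) :=
            Equiv.sigmaCongrRight fun b =>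
              ((Equiv.subtypeSubtypeEquivSubtypeInter
                (fun g : ↥(G (m+1)) => ∃ z, (g : Equiv.Perm (Pt d (m+1))) z = z)
                (fun g => π m g = b)).trans
                (Equiv.subtypeEquivRight fun g => and_comm))
    have hburn : ∑ b : ↥(G m), fix b ≤ C * tot m := St10.burnside (G m) C (horb m)
    set Big := Finset.univ.filter (fun b : ↥(G m) => t+1 ≤ fix b) with hBig
    have hmarkov : (t+1) * Big.card ≤ C * tot m := by
      calc (t+1) * Big.card = ∑ _b ∈ Big, (t+1) := by
            rw [Finset.sum_const, smul_eq_mul, mul_comm]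
        _ ≤ ∑ b ∈ Big, fix b := Finset.sum_le_sum fun b hb => (Finset.mem_filter.mp hb).2
        _ ≤ ∑ b : ↥(G m), fix b := Finset.sum_le_sum_of_subset (Finset.filter_subset _ _)
        _ ≤ C * tot m := hburn
    have hnfm : (Finset.univ.filter (fun b : ↥(G m) => 1 ≤ fix b)).card = nf m := by
      have : nf m = Nat.card {b : ↥(G m) // ∃ z, (b : Equiv.Perm (Pt d m)) z = z} := rfl
      rw [this, Nat.card_eq_fintype_card, Fintype.card_subtype]
      refine congrArg Finset.card (Finset.filter_congr fun b _ => ?_)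
      constructor
      · intro h
        obtain ⟨q, hq⟩ := (Nat.card_pos_iff.mp h).1
        exact ⟨q, hq⟩
      · rintro ⟨q, hq⟩
        exact Nat.card_pos_iff.mpr ⟨⟨⟨q, hq⟩⟩, inferInstance⟩
    have hterm : ∀ b : ↥(G m),
        (Nat.card {g : ↥(G (m+1)) // π m g = b ∧
          ∃ z, (g : Equiv.Perm (Pt d (m+1))) z = z} : ℚ) ≤
          (if 1 ≤ fix b then (1 - α^t) * K else 0) +
          (if t+1 ≤ fix b then α^t * K else 0) := by
      intro b
      by_cases h1 : 1 ≤ fix b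
      · by_cases h2 : t+1 ≤ fix b
        · rw [if_pos h1, if_pos h2]
          have h3 := hfibsplit b
          have h4 : 0 ≤ α ^ fix b := by positivity
          nlinarith
        · rw [if_pos h1, if_neg h2, add_zero]
          have hfb : fix b ≤ t := by omega
          have h5 : α ^ t ≤ α ^ fix b :=
            pow_le_pow_of_le_one (le_of_lt hα) hα1 hfb
          have h3 := hfibsplit b
          nlinarith
      · rw [if_neg h1, if_neg (by omega : ¬ (t+1 ≤ fix b)), add_zero]
        have h0 : fix b = 0 := by omega
        rw [hzero b h0]
        norm_num
    have hsum : (nf (m+1) : ℚ) ≤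
        (1-α^t) * K * nf m + α^t * K * (C * tot m) / (t+1) := by
      have h6 : (nf (m+1) : ℚ) = ∑ b : ↥(G m),
          (Nat.card {g : ↥(G (m+1)) // π m g = b ∧
            ∃ z, (g : Equiv.Perm (Pt d (m+1))) z = z} : ℚ) := by
        rw [hdecomp]; push_cast; rfl
      rw [h6]
      calc ∑ b : ↥(G m), (Nat.card {g : ↥(G (m+1)) // π m g = b ∧
            ∃ z, (g : Equiv.Perm (Pt d (m+1))) z = z} : ℚ)
          ≤ ∑ b : ↥(G m), ((if 1 ≤ fix b then (1 - α^t) * K else 0) +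
            (if t+1 ≤ fix b then α^t * K else 0)) :=
            Finset.sum_le_sum fun b _ => hterm b
        _ = (1-α^t) * K * (Finset.univ.filter (fun b : ↥(G m) => 1 ≤ fix b)).card
            + α^t * K * Big.card := by
            rw [Finset.sum_add_distrib, ← Finset.sum_filter, ← Finset.sum_filter,
              Finset.sum_const, Finset.sum_const, nsmul_eq_mul, nsmul_eq_mul, hBig]
            ring
        _ ≤ (1-α^t) * K * nf m + α^t * K * (C * tot m) / (t+1) := by
            rw [hnfm]
            have h7 : (Big.card : ℚ) ≤ (C * tot m : ℚ) / (t+1) := by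
              rw [le_div_iff₀ (by positivity : (0:ℚ) < (t:ℚ)+1)]
              have h7' : ((t+1 : ℕ) : ℚ) * (Big.card : ℚ) ≤ (C : ℚ) * (tot m : ℚ) := by
                exact_mod_cast hmarkov
              push_cast at h7'
              nlinarith [h7']
            have h8 : (0:ℚ) ≤ α^t * K := by positivity
            have h9 := mul_le_mul_of_nonneg_left h7 h8
            calc (1-α^t) * K * (nf m : ℚ) + α^t * K * Big.card
                ≤ (1-α^t) * K * nf m + α^t * K * ((C * tot m : ℚ)/(t+1)) := by linarith
              _ = (1-α^t) * K * nf m + α^t * K * (C * tot m) / (t+1) := by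
                  push_cast; ring
    -- divide by tot (m+1)
    have htot1 : (tot (m+1) : ℚ) = (tot m : ℚ) * K := by exact_mod_cast htotrec m
    have hgoal : (nf (m+1) : ℚ) / (tot (m+1) : ℚ) ≤
        (1 - α ^ t) * pr m + α ^ t * C / (t+1) := by
      rw [htot1, div_le_iff₀ (mul_pos (htotposQ m) hK)]
      refine hsum.trans (le_of_eq ?_)
      have hprm : pr m = (nf m : ℚ) / (tot m : ℚ) := rfl
      rw [hprm]
      field_simp [ne_of_gt (htotposQ m)]
    exact hgoal
  -- convergence of pr to 0
  have hptend : Filter.Tendsto pr Filter.atTop (nhds 0) := by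
    refine tendsto_order.2 ⟨fun a ha => ?_, fun a ha => ?_⟩
    · exact Filter.Eventually.of_forall fun m => lt_of_lt_of_le ha (hp0 m)
    · have hex : ∃ M, pr M < a := by
        by_contra hcon
        push_neg at hcon
        obtain ⟨t, ht⟩ := exists_nat_gt ((2 * C : ℚ) / a)
        set δ := α ^ t * a / 2 with hδ
        have hδpos : 0 < δ := by positivity
        have hCt : (C : ℚ) / (t + 1) ≤ a / 2 := by
          rw [div_le_iff₀ (by positivity : (0:ℚ) < (t:ℚ)+1)]
          rw [div_lt_iff₀ ha] at ht
          nlinarith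
        have hdrop : ∀ m,
            (∀ u : Pt d m → Equiv.Perm (Fin (d (m + 1))),
              (∀ q, u q ∈ socIn (Γ (m + 1))) →
              (Equiv.prodShear (Equiv.refl (Pt d m)) u : Equiv.Perm (Pt d (m + 1)))
                ∈ G (m + 1)) →
            pr (m + 1) ≤ pr m - δ := by
          intro m hSm
          have h1 := hstep t m hSm
          have h2 := hcon m
          have hαt : 0 < α ^ t := by positivity
          have h3 : α ^ t * C / (t + 1) = α ^ t * ((C : ℚ) / (t + 1)) := by ring
          nlinarith
        have hchain : ∀ k : ℕ, ∃ m, pr m ≤ pr 0 - k * δ := by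
          intro k
          induction k with
          | zero => exact ⟨0, by simp⟩
          | succ k ih =>
            obtain ⟨m, hm⟩ := ih
            obtain ⟨m', hm', hS⟩ := hlarge m
            refine ⟨m' + 1, ?_⟩
            have hd1 := hdrop m' hS
            have hd2 := hanti hm'
            push_cast
            linarith
        obtain ⟨k, hk⟩ := exists_nat_gt (pr 0 / δ)
        obtain ⟨m, hm⟩ := hchain k
        have h0 := hp0 m
        rw [div_lt_iff₀ hδpos] at hk
        linarith
      obtain ⟨M, hM⟩ := hex
      filter_upwards [Filter.eventually_ge_atTop M] with m hm
      exact lt_of_le_of_lt (hanti hm) hM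
  have hfuneq : (fun m => (Nat.card {g : Equiv.Perm (Pt d m) //
        g ∈ G m ∧ ∀ p, g p ≠ p} : ℚ) / (Nat.card ↥(G m) : ℚ))
      = fun m => 1 - pr m := funext htarget
  rw [hfuneq]
  simpa using Filter.Tendsto.const_sub (1 : ℚ) hptend
end

section
/- Let γ ∈ (0,1) and let g : ℕ → ℕ satisfy g(N) = o(N). Then the quantity Σ_{k=0}^{g(N)−1} γ^{N−k} · C(N, N−k) is at most (γ^{N/g(N) − 1} · N)^{g(N)}, and in particular tends to 0 as N → ∞. -/
/-!
Since `C(N, N - k) = C(N, k)` and `γ ^ (N - k) ≤ γ ^ (N - m)` for `k < m`, the sum is at most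
`γ ^ (N - m) * ∑_{k < m} C(N, k)`. The crude bound `∑_{k < m} C(N, k) ≤ m N ^ (m - 1) ≤ N ^ m`
gives the explicit estimate, but it is too weak for the limit when `g N * log N` is not `o(N)`.
For the limit we use instead `t ^ m ∑_{k < m} C(N, k) ≤ (1 + t) ^ N ≤ exp (N t)` with `t = m / N`,
which bounds the sum by `exp (N φ(m / N))` with `φ t = (1 - t) log γ + t - t log t`;
as `m / N → 0`, `φ (m / N) → log γ < 0`.
-/

open Filter Finset Real

theorem Nat.sum_range_choose_le_pow {N m : ℕ} (hm : m ≤ N) :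
    ∑ k ∈ range m, N.choose k ≤ N ^ m := by
  calc ∑ k ∈ range m, N.choose k
      ≤ ∑ _k ∈ range m, N ^ (m - 1) :=
        sum_le_sum fun k hk => (N.choose_le_pow k).trans
          (Nat.pow_le_pow_right (by grind) (by grind))
    _ = m * N ^ (m - 1) := by rw [sum_const, card_range, smul_eq_mul]
    _ ≤ N ^ m := by
        rcases m with _ | m
        · simp
        · rw [pow_succ', Nat.add_sub_cancel]
          exact Nat.mul_le_mul_right _ hm

theorem pow_mul_sum_range_choose_le {t : ℝ} (ht0 : 0 ≤ t) (ht1 : t ≤ 1) (N m : ℕ) :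
    t ^ m * ∑ k ∈ range m, (N.choose k : ℝ) ≤ (1 + t) ^ N := by
  calc t ^ m * ∑ k ∈ range m, (N.choose k : ℝ)
      ≤ ∑ k ∈ range m, t ^ k * (N.choose k : ℝ) := by
        rw [mul_sum]
        refine sum_le_sum fun k hk => mul_le_mul_of_nonneg_right ?_ (by positivity)
        exact pow_le_pow_of_le_one ht0 ht1 (mem_range.1 hk).le
    _ ≤ ∑ k ∈ range (max m (N + 1)), t ^ k * (N.choose k : ℝ) :=
        sum_le_sum_of_subset_of_nonneg (range_subset_range.2 (le_max_left _ _))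
          fun _ _ _ => by positivity
    _ = ∑ k ∈ range (N + 1), t ^ k * (N.choose k : ℝ) := by
        refine (sum_subset (range_subset_range.2 (le_max_right _ _)) fun k _ hk => ?_).symm
        rw [Nat.choose_eq_zero_of_lt (by simpa using hk), Nat.cast_zero, mul_zero]
    _ = (1 + t) ^ N := by
        rw [add_comm 1 t, add_pow]
        simp only [one_pow, mul_one]

theorem rpow_div_sub_one_mul_pow {γ : ℝ} (hγ : 0 ≤ γ) (x : ℝ) {N m : ℕ} (hm0 : 0 < m)
    (hm : m ≤ N) : (γ ^ ((N : ℝ) / m - 1) * x) ^ m = γ ^ (N - m) * x ^ m := by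
  rw [mul_pow, ← rpow_natCast (γ ^ _), ← rpow_mul hγ, ← rpow_natCast γ,
    Nat.cast_sub hm]
  congr 2
  field_simp

theorem sum_range_choose_le_exp {N m : ℕ} (hN : 0 < N) (hm : m ≤ N) :
    ∑ k ∈ range m, (N.choose k : ℝ) ≤
      exp (N * ((m / N : ℝ) + negMulLog (m / N))) := by
  rcases m.eq_zero_or_pos with rfl | hm0
  · simp
  set t : ℝ := m / N with ht
  have hN' : (0 : ℝ) < N := by exact_mod_cast hN
  have ht0 : 0 < t := by positivity
  have ht1 : t ≤ 1 := div_le_one_of_le₀ (by exact_mod_cast hm) hN'.le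
  have ht_pow : t ^ m = exp (-(N * negMulLog t)) := by
    rw [← exp_log (pow_pos ht0 m), log_pow, negMulLog, ht]
    congr 1
    field_simp
  have h_one_add : (1 + t) ^ N ≤ exp (N * t) := by
    rw [exp_nat_mul]
    exact pow_le_pow_left₀ (by positivity) (by linarith [add_one_le_exp t]) N
  calc ∑ k ∈ range m, (N.choose k : ℝ)
      = (t ^ m * ∑ k ∈ range m, (N.choose k : ℝ)) * exp (N * negMulLog t) := by
        rw [ht_pow, mul_comm, ← mul_assoc, ← exp_add, add_neg_cancel, exp_zero, one_mul]
    _ ≤ exp (N * t) * exp (N * negMulLog t) := by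
        gcongr
        exact (pow_mul_sum_range_choose_le ht0.le ht1 N m).trans h_one_add
    _ = exp (N * (t + negMulLog t)) := by rw [← exp_add, mul_add]

theorem sum_pow_sub_mul_choose_le {γ : ℝ} (hγ0 : 0 ≤ γ) (hγ1 : γ ≤ 1) {N m : ℕ} (hm : m ≤ N) :
    ∑ k ∈ range m, γ ^ (N - k) * (N.choose (N - k) : ℝ) ≤
      γ ^ (N - m) * ∑ k ∈ range m, (N.choose k : ℝ) := by
  rw [mul_sum]
  refine sum_le_sum fun k hk => ?_
  have hk : k < m := mem_range.1 hk
  rw [Nat.choose_symm (by omega)]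
  exact mul_le_mul_of_nonneg_right (pow_le_pow_of_le_one hγ0 hγ1 (by omega)) (by positivity)

theorem sum_pow_sub_mul_choose_le_exp {γ : ℝ} (hγ0 : 0 < γ) (hγ1 : γ ≤ 1) {N m : ℕ}
    (hN : 0 < N) (hm : m ≤ N) :
    ∑ k ∈ range m, γ ^ (N - k) * (N.choose (N - k) : ℝ) ≤
      exp (N * ((1 - m / N) * log γ + ((m / N : ℝ) + negMulLog (m / N)))) := by
  have hγ_pow : γ ^ (N - m) = exp (N * ((1 - m / N) * log γ)) := by
    rw [← exp_log (pow_pos hγ0 _), log_pow, Nat.cast_sub hm]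
    congr 1
    field_simp
  calc ∑ k ∈ range m, γ ^ (N - k) * (N.choose (N - k) : ℝ)
      ≤ γ ^ (N - m) * ∑ k ∈ range m, (N.choose k : ℝ) := sum_pow_sub_mul_choose_le hγ0.le hγ1 hm
    _ ≤ exp (N * ((1 - m / N) * log γ)) * exp (N * ((m / N : ℝ) + negMulLog (m / N))) := by
        rw [hγ_pow]
        gcongr
        exact sum_range_choose_le_exp hN hm
    _ = _ := by rw [← exp_add, ← mul_add]

theorem sum_pow_sub_mul_choose_le_rpow {γ : ℝ} (hγ0 : 0 ≤ γ) (hγ1 : γ ≤ 1) {N m : ℕ}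
    (hm : m ≤ N) :
    ∑ k ∈ range m, γ ^ (N - k) * (N.choose (N - k) : ℝ) ≤
      (γ ^ ((N : ℝ) / m - 1) * N) ^ m := by
  rcases m.eq_zero_or_pos with rfl | hm0
  · simp
  rw [rpow_div_sub_one_mul_pow hγ0 _ hm0 hm]
  calc ∑ k ∈ range m, γ ^ (N - k) * (N.choose (N - k) : ℝ)
      ≤ γ ^ (N - m) * ∑ k ∈ range m, (N.choose k : ℝ) := sum_pow_sub_mul_choose_le hγ0 hγ1 hm
    _ ≤ γ ^ (N - m) * (N : ℝ) ^ m := by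
        gcongr
        exact_mod_cast Nat.sum_range_choose_le_pow hm

theorem tendsto_sum_pow_sub_mul_choose {γ : ℝ} (hγ0 : 0 < γ) (hγ1 : γ < 1) {g : ℕ → ℕ}
    (hg : Tendsto (fun N => (g N : ℝ) / N) atTop (nhds 0)) :
    Tendsto (fun N => ∑ k ∈ range (g N), γ ^ (N - k) * (N.choose (N - k) : ℝ))
      atTop (nhds 0) := by
  set φ : ℝ → ℝ := fun t => (1 - t) * log γ + (t + negMulLog t)
  have hφ : Tendsto (fun N => φ (g N / N)) atTop (nhds (log γ)) := by
    have hφ0 : φ 0 = log γ := by simp [φ]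
    exact hφ0 ▸ ((by fun_prop : Continuous φ).tendsto 0).comp hg
  have h_exp : Tendsto (fun N : ℕ => exp (N * φ (g N / N))) atTop (nhds 0) :=
    tendsto_exp_atBot.comp (tendsto_natCast_atTop_atTop.atTop_mul_neg (log_neg hγ0 hγ1) hφ)
  have hg_le : ∀ᶠ N in atTop, g N ≤ N := by
    filter_upwards [hg.eventually_lt_const one_pos, eventually_gt_atTop 0] with N hN hN0
    exact_mod_cast ((div_lt_one (by positivity)).1 hN).le
  refine tendsto_of_tendsto_of_tendsto_of_le_of_le' tendsto_const_nhds h_exp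
    (Eventually.of_forall fun N => sum_nonneg fun k _ => by positivity) ?_
  filter_upwards [hg_le, eventually_gt_atTop 0] with N hN hN0
  exact sum_pow_sub_mul_choose_le_exp hγ0 hγ1.le hN0 hN

/-- for `γ ∈ (0,1)` and `g(N) = o(N)`, the sum
`∑_{k=0}^{g(N)−1} γ^{N−k}·C(N, N−k)` is at most `(γ^{N/g(N) − 1}·N)^{g(N)}`, and in
particular tends to `0` as `N → ∞`. -/
theorem stmt11 (γ : ℝ) (hγ0 : 0 < γ) (hγ1 : γ < 1) (g : ℕ → ℕ)
    (ho : Tendsto (fun N => (g N : ℝ) / (N : ℝ)) atTop (nhds 0)) :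
    (∀ N : ℕ, g N ≤ N →
      ∑ k ∈ Finset.range (g N), γ ^ (N - k) * (N.choose (N - k) : ℝ) ≤
        (γ ^ (((N : ℝ) / (g N : ℝ)) - 1) * (N : ℝ)) ^ (g N)) ∧
    Tendsto (fun N => ∑ k ∈ Finset.range (g N), γ ^ (N - k) * (N.choose (N - k) : ℝ))
      atTop (nhds 0) :=
  ⟨fun _ hN => sum_pow_sub_mul_choose_le_rpow hγ0.le hγ1.le hN,
    tendsto_sum_pow_sub_mul_choose hγ0 hγ1 ho⟩
end

section
/- Let G be a transitive permutation group on a finite set Ω that preserves a block system J with blocks of size d ≥ 2, so that G embeds into U ≀_J V with V the induced action on blocks. Let x ∈ G be a permutation of Ω whose number of disjoint cycles equals the number of disjoint cycles of its image x̄ in V (the action on blocks). Then every cycle of x, viewed on Ω, has length exactly d times the length of the corresponding cycle of x̄; in particular, if y ∈ G lies in the block kernel, acts only on a single block contained in the support of a cycle of x̄ of length r, and maps the point of that block hit 'second' by the cycle of x to the point hit 'first', then y∘x has strictly more disjoint cycles than x̄. -/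
/-- The number of disjoint cycles of a permutation, counting fixed points as cycles
(equivalently, the number of orbits of `⟨σ⟩`). -/
def ncycles {T : Type*} [Fintype T] [DecidableEq T] (σ : Equiv.Perm T) : ℕ :=
  σ.cycleType.card + (Fintype.card T - σ.support.card)

section Aux

open Equiv Equiv.Perm Function

variable {T : Type*} [Fintype T] [DecidableEq T]

lemma perm_minimalPeriod_pos (σ : Equiv.Perm T) (p : T) :
    0 < Function.minimalPeriod ⇑σ p := by
  refine Function.IsPeriodicPt.minimalPeriod_pos (orderOf_pos σ) ?_
  show Function.IsPeriodicPt ⇑σ (orderOf σ) p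
  rw [Function.IsPeriodicPt, Function.IsFixedPt, ← Equiv.Perm.coe_pow, pow_orderOf_eq_one]
  rfl

lemma card_sameCycle_class (σ : Equiv.Perm T) (p : T) :
    Nat.card {q // σ.SameCycle p q} = Function.minimalPeriod ⇑σ p := by
  set m := Function.minimalPeriod ⇑σ p with hm
  have hmpos : 0 < m := perm_minimalPeriod_pos σ p
  have hbij : Function.Bijective
      (fun k : Fin m => (⟨(σ ^ (k : ℕ)) p,
        ⟨((k : ℕ) : ℤ), by rw [zpow_natCast]⟩⟩ : {q // σ.SameCycle p q})) := by
    constructor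
    · intro a b hab
      have hab' : (⇑σ)^[(a : ℕ)] p = (⇑σ)^[(b : ℕ)] p := by
        simpa [← Equiv.Perm.coe_pow] using congrArg Subtype.val hab
      exact Fin.ext (Function.iterate_injOn_Iio_minimalPeriod
        (Set.mem_Iio.2 a.2) (Set.mem_Iio.2 b.2) hab')
    · rintro ⟨q, hq⟩
      obtain ⟨i, _, _, hi⟩ := Equiv.Perm.SameCycle.exists_pow_eq σ hq
      refine ⟨⟨i % m, Nat.mod_lt _ hmpos⟩, Subtype.ext ?_⟩
      show (σ ^ (i % m)) p = q
      rw [← hi, Equiv.Perm.coe_pow, Equiv.Perm.coe_pow]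
      exact Function.iterate_mod_minimalPeriod_eq
  calc Nat.card {q // σ.SameCycle p q} = Nat.card (Fin m) :=
        (Nat.card_eq_of_bijective _ hbij).symm
    _ = m := by simp

lemma ncycles_eq_nat_card (σ : Equiv.Perm T) :
    ncycles σ = Nat.card (Quotient (Equiv.Perm.SameCycle.setoid σ)) := by
  classical
  let f : T → {c // c ∈ σ.cycleFactorsFinset} ⊕ {q // σ q = q} := fun p =>
    if h : p ∈ σ.support then
      Sum.inl ⟨σ.cycleOf p, Equiv.Perm.cycleOf_mem_cycleFactorsFinset_iff.2 h⟩
    else Sum.inr ⟨p, by simpa [Equiv.Perm.mem_support, not_not] using h⟩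
  have hf : ∀ a b : T, σ.SameCycle a b → f a = f b := by
    intro a b hab
    by_cases ha : a ∈ σ.support
    · have hb : b ∈ σ.support := by
        obtain ⟨i, hi⟩ := hab
        rw [← hi]
        exact Equiv.Perm.zpow_apply_mem_support.2 ha
      simp only [f, dif_pos ha, dif_pos hb]
      exact congrArg Sum.inl (Subtype.ext hab.cycleOf_eq)
    · have ha' : σ a = a := by simpa [Equiv.Perm.mem_support, not_not] using ha
      obtain ⟨i, hi⟩ := hab
      have hba : b = a := by
        rw [← hi, Equiv.Perm.zpow_apply_eq_self_of_apply_eq_self ha']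
      subst hba
      rfl
  let F : Quotient (Equiv.Perm.SameCycle.setoid σ) →
      {c // c ∈ σ.cycleFactorsFinset} ⊕ {q // σ q = q} := Quotient.lift f hf
  have hFb : Function.Bijective F := by
    constructor
    · intro u v
      induction u using Quotient.inductionOn with | h a =>
      induction v using Quotient.inductionOn with | h b =>
      intro hab
      change f a = f b at hab
      refine Quotient.sound ?_
      show σ.SameCycle a b
      simp only [f] at hab
      by_cases ha : a ∈ σ.support <;> by_cases hb : b ∈ σ.support
      · rw [dif_pos ha, dif_pos hb] at hab
        have hcyc : σ.cycleOf a = σ.cycleOf b := congrArg Subtype.val (Sum.inl.inj hab)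
        have hbmem : b ∈ (σ.cycleOf a).support := by
          rw [hcyc]
          exact Equiv.Perm.mem_support_cycleOf_iff.2 ⟨Equiv.Perm.SameCycle.refl σ b, hb⟩
        exact (Equiv.Perm.mem_support_cycleOf_iff.1 hbmem).1
      · rw [dif_pos ha, dif_neg hb] at hab
        exact absurd hab (by simp)
      · rw [dif_neg ha, dif_pos hb] at hab
        exact absurd hab (by simp)
      · rw [dif_neg ha, dif_neg hb] at hab
        have hba : a = b := congrArg Subtype.val (Sum.inr.inj hab)
        rw [hba]
    · rintro (⟨c, hc⟩ | ⟨q, hq⟩)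
      · have hcyc : c.IsCycle := (Equiv.Perm.mem_cycleFactorsFinset_iff.1 hc).1
        obtain ⟨a, ha⟩ := hcyc.nonempty_support
        have haσ : a ∈ σ.support := by
          rw [Equiv.Perm.mem_support, ← (Equiv.Perm.mem_cycleFactorsFinset_iff.1 hc).2 a ha]
          exact Equiv.Perm.mem_support.1 ha
        refine ⟨Quotient.mk _ a, ?_⟩
        show f a = _
        simp only [f, dif_pos haσ]
        exact congrArg Sum.inl (Subtype.ext (Equiv.Perm.cycle_is_cycleOf ha hc).symm)
      · refine ⟨Quotient.mk _ q, ?_⟩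
        show f q = _
        have hq' : q ∉ σ.support := by simp [Equiv.Perm.mem_support, hq]
        simp only [f, dif_neg hq']
  have hcard := Nat.card_eq_of_bijective F hFb
  rw [hcard, Nat.card_sum]
  have h1 : Nat.card {c // c ∈ σ.cycleFactorsFinset} = σ.cycleType.card := by
    rw [Nat.card_eq_fintype_card, Fintype.card_coe, Equiv.Perm.cycleType_def,
      Multiset.card_map]
    rfl
  have h2 : Nat.card {q // σ q = q} = Fintype.card T - σ.support.card := by
    rw [Nat.card_eq_fintype_card]
    have he : {q // σ q = q} ≃ {q // ¬ q ∈ σ.support} :=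
      Equiv.subtypeEquivRight (fun q => by simp [Equiv.Perm.mem_support, not_not, eq_comm])
    rw [Fintype.card_congr he, Fintype.card_subtype_compl]
    congr 1
    rw [Fintype.card_coe]
  rw [h1, h2, ncycles]

end Aux

section Blocks

open Equiv Equiv.Perm Function

variable {I : Type*} [Fintype I] [DecidableEq I] {d : ℕ}

lemma pow_proj (g : Equiv.Perm (I × Fin d)) (g' : Equiv.Perm I)
    (hgg' : ∀ p : I × Fin d, (g p).1 = g' p.1) :
    ∀ (k : ℕ) (p : I × Fin d), ((g ^ k) p).1 = (g' ^ k) p.1 := by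
  intro k
  induction k with
  | zero => intro p; simp
  | succ n ih =>
    intro p
    rw [pow_succ, pow_succ, Equiv.Perm.mul_apply, Equiv.Perm.mul_apply, ih, hgg']

lemma sameCycle_proj (g : Equiv.Perm (I × Fin d)) (g' : Equiv.Perm I)
    (hgg' : ∀ p : I × Fin d, (g p).1 = g' p.1) {p q : I × Fin d}
    (h : g.SameCycle p q) : g'.SameCycle p.1 q.1 := by
  obtain ⟨i, _, _, hi⟩ := Equiv.Perm.SameCycle.exists_pow_eq g h
  exact ⟨(i : ℤ), by rw [zpow_natCast, ← hi, pow_proj g g' hgg']⟩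

/-- The projection on quotients by the same-cycle relation. -/
noncomputable def projQ (g : Equiv.Perm (I × Fin d)) (g' : Equiv.Perm I)
    (hgg' : ∀ p : I × Fin d, (g p).1 = g' p.1) :
    Quotient (Equiv.Perm.SameCycle.setoid g) → Quotient (Equiv.Perm.SameCycle.setoid g') :=
  Quotient.lift (fun p => Quotient.mk _ p.1)
    (fun _ _ h => Quotient.sound (sameCycle_proj g g' hgg' h))

lemma projQ_surj (hd : 0 < d) (g : Equiv.Perm (I × Fin d)) (g' : Equiv.Perm I)
    (hgg' : ∀ p : I × Fin d, (g p).1 = g' p.1) :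
    Function.Surjective (projQ g g' hgg') := by
  intro u
  induction u using Quotient.inductionOn with | h i =>
  exact ⟨Quotient.mk _ (i, ⟨0, hd⟩), rfl⟩

lemma ncycles_le (hd : 0 < d) (g : Equiv.Perm (I × Fin d)) (g' : Equiv.Perm I)
    (hgg' : ∀ p : I × Fin d, (g p).1 = g' p.1) :
    ncycles g' ≤ ncycles g := by
  rw [ncycles_eq_nat_card, ncycles_eq_nat_card]
  exact Nat.card_le_card_of_surjective _ (projQ_surj hd g g' hgg')

lemma key (hd : 0 < d) (g : Equiv.Perm (I × Fin d)) (g' : Equiv.Perm I)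
    (hgg' : ∀ p : I × Fin d, (g p).1 = g' p.1)
    (hcyc : ncycles g = ncycles g') (p : I × Fin d) :
    Function.minimalPeriod ⇑g p = d * Function.minimalPeriod ⇑g' p.1 := by
  have hsurj := projQ_surj hd g g' hgg'
  have hle : Nat.card (Quotient (Equiv.Perm.SameCycle.setoid g)) ≤
      Nat.card (Quotient (Equiv.Perm.SameCycle.setoid g')) := by
    rw [← ncycles_eq_nat_card, ← ncycles_eq_nat_card, hcyc]
  have hbij := hsurj.bijective_of_nat_card_le hle
  have hiff : ∀ q : I × Fin d, g.SameCycle p q ↔ g'.SameCycle p.1 q.1 := by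
    intro q
    constructor
    · exact sameCycle_proj g g' hgg'
    · intro h
      have : projQ g g' hgg' (Quotient.mk _ p) = projQ g g' hgg' (Quotient.mk _ q) :=
        Quotient.sound h
      have := hbij.1 this
      exact Quotient.exact this
  have e1 : {q // g.SameCycle p q} ≃ {q : I × Fin d // g'.SameCycle p.1 q.1} :=
    Equiv.subtypeEquivRight hiff
  have e2 : {q : I × Fin d // g'.SameCycle p.1 q.1} ≃ {j // g'.SameCycle p.1 j} × Fin d :=
    { toFun := fun q => (⟨q.1.1, q.2⟩, q.1.2)
      invFun := fun z => ⟨(z.1.1, z.2), z.1.2⟩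
      left_inv := fun q => rfl
      right_inv := fun z => rfl }
  calc Function.minimalPeriod ⇑g p = Nat.card {q // g.SameCycle p q} :=
        (card_sameCycle_class g p).symm
    _ = Nat.card ({j // g'.SameCycle p.1 j} × Fin d) := Nat.card_congr (e1.trans e2)
    _ = Function.minimalPeriod ⇑g' p.1 * d := by
        rw [Nat.card_prod, card_sameCycle_class, Nat.card_eq_fintype_card, Fintype.card_fin]
    _ = d * Function.minimalPeriod ⇑g' p.1 := Nat.mul_comm _ _

end Blocks

/-- let `G` be a transitive group on `I × Fin d` preserving the blocks
`{i} × Fin d` (`d ≥ 2`), `x ∈ G` with block image `x'`, and suppose `x` has as many disjoint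
cycles as `x'`. Then every cycle of `x` has length `d` times the length of the corresponding
cycle of `x'`; and if `y ∈ G` lies in the block kernel, acts only on a single block, and maps
the point of that block hit second by the cycle of `x` through `p₀` to the point hit first,
then `y ∘ x` has strictly more disjoint cycles than `x'`. -/
theorem stmt12 {I : Type*} [Fintype I] [DecidableEq I] (d : ℕ) (hd : 2 ≤ d)
    (G : Subgroup (Equiv.Perm (I × Fin d)))
    (htrans : ∀ p q : I × Fin d, ∃ g ∈ G, g p = q)
    (hblocks : ∀ g ∈ G, ∃ g' : Equiv.Perm I, ∀ p : I × Fin d, (g p).1 = g' p.1)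
    (x : Equiv.Perm (I × Fin d)) (hx : x ∈ G)
    (x' : Equiv.Perm I) (hxx' : ∀ p : I × Fin d, (x p).1 = x' p.1)
    (hcyc : ncycles x = ncycles x') :
    (∀ p : I × Fin d,
      Function.minimalPeriod (fun q => x q) p =
        d * Function.minimalPeriod (fun i => x' i) p.1) ∧
    (∀ y ∈ G, (∀ p : I × Fin d, (y p).1 = p.1) →
      ∀ p₀ : I × Fin d, (∀ p : I × Fin d, p.1 ≠ p₀.1 → y p = p) →
        y ((x ^ Function.minimalPeriod (fun i => x' i) p₀.1) p₀) = p₀ →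
        ncycles x' < ncycles (y * x)) := by
  have hd0 : 0 < d := by omega
  constructor
  · intro p
    exact key hd0 x x' hxx' hcyc p
  · intro y hy hy1 p₀ hyfix hysecond
    set r := Function.minimalPeriod (fun i => x' i) p₀.1 with hr
    have hrpos : 0 < r := perm_minimalPeriod_pos x' p₀.1
    set z := y * x with hz
    have hzz' : ∀ p : I × Fin d, (z p).1 = x' p.1 := by
      intro p
      rw [hz, Equiv.Perm.mul_apply, hy1, hxx']
    -- z^k p₀ = x^k p₀ for k < r
    have hzk : ∀ k, k < r → (z ^ k) p₀ = (x ^ k) p₀ := by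
      intro k hk
      induction k with
      | zero => simp
      | succ n ih =>
        have hn : n < r := Nat.lt_of_succ_lt hk
        have h1 : (z ^ (n + 1)) p₀ = z ((x ^ n) p₀) := by
          rw [pow_succ', Equiv.Perm.mul_apply, ih hn]
        have h2 : z ((x ^ n) p₀) = y ((x ^ (n + 1)) p₀) := by
          rw [hz, Equiv.Perm.mul_apply, pow_succ', Equiv.Perm.mul_apply]
        rw [h1, h2]
        apply hyfix
        rw [pow_proj x x' hxx']
        intro hcontra
        have hpp : Function.IsPeriodicPt (fun i => x' i) (n + 1) p₀.1 := by
          show (fun i => x' i)^[n+1] p₀.1 = p₀.1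
          rw [← Equiv.Perm.coe_pow]
          exact hcontra
        exact Function.not_isPeriodicPt_of_pos_of_lt_minimalPeriod (Nat.succ_ne_zero n)
          hk hpp
    have hzr : (z ^ r) p₀ = p₀ := by
      have hr1 : r = (r - 1) + 1 := (Nat.succ_pred_eq_of_pos hrpos).symm
      rw [hr1, pow_succ', Equiv.Perm.mul_apply, hzk (r - 1) (by omega),
        hz, Equiv.Perm.mul_apply, ← Equiv.Perm.mul_apply x, ← pow_succ', ← hr1]
      exact hysecond
    have hle : ncycles x' ≤ ncycles z := ncycles_le hd0 z x' hzz'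
    rcases Nat.lt_or_ge (ncycles x') (ncycles z) with h | h
    · exact h
    · exfalso
      have heq : ncycles z = ncycles x' := le_antisymm h hle
      have hper : Function.minimalPeriod ⇑z p₀ = d * r := key hd0 z x' hzz' heq p₀
      have hzle : Function.minimalPeriod ⇑z p₀ ≤ r := by
        refine Function.IsPeriodicPt.minimalPeriod_le hrpos ?_
        show (⇑z)^[r] p₀ = p₀
        rw [← Equiv.Perm.coe_pow]
        exact hzr
      rw [hper] at hzle
      have : d * r ≥ 2 * r := Nat.mul_le_mul_right r hd
      omega
end
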